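/- Let phi(u,v) = (phi_1, phi_2, phi_3) be a formal map from (C^2,0) to (C^3,0), with phi_i = u^{r_i} v^{s_i} φ~_i where φ~_i are invertible formal power series, and let omega~ = p1 dx/x + p2 dy/y + φ(x^{p1} y^{p2})(λ2 dy/y + λ3 dz/z) be the logarithmic 1-form of the saddle-node model (B2), with p1, p2 positive integers, φ a formal non-unit, λ2, λ3 in C*. Set r = p1 r1 + p2 r2 and s = p1 s1 + p2 s2. If r > 0 and s > 0, then uv · phi* omega~ = r v du + s u dv + uv θ for some formal 1-form θ; consequently the pulled-back foliation has a simple non-degenerate singularity at the origin, with linear part r v du + s u dv. -/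

import Mathlib

noncomputable section

open scoped Classical

/-- The ring of formal power series in `n` variables over `ℂ`. -/
abbrev FPS (n : ℕ) := MvPowerSeries (Fin n) ℂ

namespace FPS

/-- Total degree of a monomial exponent. -/
def mdeg {n : ℕ} (m : Fin n →₀ ℕ) : ℕ := m.sum fun _ k => k

/-- Formal partial derivative of a multivariate formal power series. -/
def pderiv {n : ℕ} (i : Fin n) (f : FPS n) : FPS n :=
  fun m => ((m i : ℂ) + 1) * MvPowerSeries.coeff (m + Finsupp.single i 1) f

/-- Substitution of an `k`-tuple of power series (each with zero constant term)
into a formal power series in `k` variables.  (Coefficientwise definition; it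
agrees with the usual substitution whenever each `φ i` has zero constant term.) -/
def subst {k l : ℕ} (φ : Fin k → FPS l) (f : FPS k) : FPS l :=
  fun m => ∑ e ∈ Finset.Iic (Finsupp.equivFunOnFinite.symm fun _ : Fin k => mdeg m),
    MvPowerSeries.coeff e f * MvPowerSeries.coeff m (∏ i, (φ i) ^ (e i))

/-- Substitution of a one-variable formal power series at an element of `FPS l`
with zero constant term. -/
def subst1 {l : ℕ} (f : PowerSeries ℂ) (g : FPS l) : FPS l :=
  fun m => ∑ nn ∈ Finset.range (mdeg m + 1),
    PowerSeries.coeff (R := ℂ) nn f * MvPowerSeries.coeff m (g ^ nn)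

/-- Substitution of a tuple of one-variable power series (each with zero constant
term) into a multivariate formal power series: the composition `f ∘ γ`. -/
def substCurve {k : ℕ} (f : FPS k) (γ : Fin k → PowerSeries ℂ) : PowerSeries ℂ :=
  PowerSeries.mk fun n => ∑ e ∈ Finset.Iic (Finsupp.equivFunOnFinite.symm fun _ : Fin k => n),
    MvPowerSeries.coeff e f * PowerSeries.coeff (R := ℂ) n (∏ i, (γ i) ^ (e i))

/-- The order (algebraic multiplicity) of a multivariate formal power series,
as an extended natural number. -/
def ord {n : ℕ} (f : FPS n) : ℕ∞ :=
  sInf ((fun m => (mdeg m : ℕ∞)) '' {m | MvPowerSeries.coeff m f ≠ 0})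

/-- The order of `f` along the coordinate hyperplane `{xᵢ = 0}`. -/
def ordAlong {n : ℕ} (i : Fin n) (f : FPS n) : ℕ∞ :=
  sInf ((fun m => (m i : ℕ∞)) '' {m | MvPowerSeries.coeff m f ≠ 0})

/-- Division of `f` by `xᵢ ^ k` (defined coefficientwise; this is the true
quotient whenever `xᵢ ^ k` divides `f`). -/
def xDiv {n : ℕ} (i : Fin n) (k : ℕ) (f : FPS n) : FPS n :=
  fun m => MvPowerSeries.coeff (m + Finsupp.single i k) f

/-- Division of `f` by the maximal power of `xᵢ` dividing it. -/
def xSat {n : ℕ} (i : Fin n) (f : FPS n) : FPS n :=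
  xDiv i (ordAlong i f).toNat f

end FPS
/-! ### Germs of singular holomorphic (formal) foliations at `(ℂ²,0)`

A foliation germ is given by a `1`-form `ω 0 du + ω 1 dv` with coefficients
in `ℂ[[u,v]]`.  We develop: simple singularities, saddle-nodes, separatrices,
divisors (encoded by flags on the two coordinate axes), blow-up charts,
reduction of singularities and foliations of second type. -/

namespace Fol2

open FPS

abbrev O2 := FPS 2

/-- A formal `1`-form `A du + B dv` at `(ℂ²,0)`: `ω 0 = A`, `ω 1 = B`. -/
abbrev Form2 := Fin 2 → O2

def U : O2 := MvPowerSeries.X 0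
def V : O2 := MvPowerSeries.X 1

/-- The origin is a singular point of the foliation. -/
def IsSing (ω : Form2) : Prop := ∀ i, MvPowerSeries.constantCoeff (σ := Fin 2) (R := ℂ) (ω i) = 0

/-- The coefficients of the `1`-form have no common (non-unit) factor. -/
def Reduced (ω : Form2) : Prop := ∀ d : O2, d ∣ ω 0 → d ∣ ω 1 → IsUnit d

/-- The linear part, at the origin, of the dual vector field
`B ∂/∂u − A ∂/∂v` of the `1`-form `A du + B dv`. -/
def linMat (ω : Form2) : Matrix (Fin 2) (Fin 2) ℂ :=
  !![MvPowerSeries.coeff (Finsupp.single 0 1) (ω 1),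
     MvPowerSeries.coeff (Finsupp.single 1 1) (ω 1);
     -MvPowerSeries.coeff (Finsupp.single 0 1) (ω 0),
     -MvPowerSeries.coeff (Finsupp.single 1 1) (ω 0)]

/-- A simple singularity: the linear part of the dual vector field is
non-nilpotent and the quotient of its eigenvalues is not a positive rational. -/
def SimpleSing (ω : Form2) : Prop :=
  IsSing ω ∧ linMat ω * linMat ω ≠ 0 ∧
    ∀ a b : ℂ, a + b = (linMat ω).trace → a * b = (linMat ω).det →
      ∀ q : ℚ, 0 < q → a ≠ (q : ℂ) * b

/-- A simple singularity is non-degenerate if both eigenvalues are non-zero. -/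
def NonDegenerate (ω : Form2) : Prop := SimpleSing ω ∧ (linMat ω).det ≠ 0

/-- A saddle-node: a simple singularity with one zero eigenvalue. -/
def SaddleNode (ω : Form2) : Prop := SimpleSing ω ∧ (linMat ω).det = 0

/-- The axis `{u = 0}` is invariant. -/
def uInvariant (ω : Form2) : Prop := U ∣ ω 1

/-- The axis `{v = 0}` is invariant. -/
def vInvariant (ω : Form2) : Prop := V ∣ ω 0

/-- A separatrix: a formal irreducible invariant curve `f = 0`,
i.e. `η ∧ df = (f h) du ∧ dv`. -/
def IsSepBranch (ω : Form2) (f : O2) : Prop :=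
  Irreducible f ∧ ∃ h : O2, ω 0 * FPS.pderiv 1 f - ω 1 * FPS.pderiv 0 f = f * h

/-- For a saddle-node, `{u = 0}` is the weak separatrix: it is invariant and
tangent to the kernel of the linear part (the zero-eigenvalue direction). -/
def weakSepIsU (ω : Form2) : Prop :=
  SaddleNode ω ∧ uInvariant ω ∧ (linMat ω).mulVec ![0, 1] = 0

/-- For a saddle-node, `{v = 0}` is the weak separatrix. -/
def weakSepIsV (ω : Form2) : Prop :=
  SaddleNode ω ∧ vInvariant ω ∧ (linMat ω).mulVec ![1, 0] = 0

/-- A local state: a foliation germ together with a normal crossings divisor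
contained in the coordinate axes, encoded by flags (`e 0` : the axis
`{u = 0}` is a component, `e 1` : the axis `{v = 0}` is a component). -/
structure St where
  ω : Form2
  e : Fin 2 → Bool

/-- `𝒢` is `ℰ`-simple: a simple singularity with `ℰ ⊂ Sep₀(𝒢)`. -/
def ESimple (s : St) : Prop :=
  SimpleSing s.ω ∧ (s.e 0 = true → uInvariant s.ω) ∧ (s.e 1 = true → vInvariant s.ω)

/-- `𝒢` is `ℰ`-regular: a regular point, and in suitable coordinates `ℰ ⊂ {uv = 0}`
with `𝒢 : du = 0`; concretely, each component of `ℰ` is invariant or transverse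
to the foliation. -/
def ERegular (s : St) : Prop :=
  (∃ i, MvPowerSeries.constantCoeff (σ := Fin 2) (R := ℂ) (s.ω i) ≠ 0) ∧
  (s.e 0 = true → (uInvariant s.ω ∨ MvPowerSeries.constantCoeff (σ := Fin 2) (R := ℂ) (s.ω 1) ≠ 0)) ∧
  (s.e 1 = true → (vInvariant s.ω ∨ MvPowerSeries.constantCoeff (σ := Fin 2) (R := ℂ) (s.ω 0) ≠ 0))

/-- An `ℰ`-simple singularity is `ℰ`-well oriented if it is non-degenerate or a
saddle-node whose weak separatrix is not contained in `ℰ`. -/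
def EWellOriented (s : St) : Prop :=
  ESimple s ∧ ((linMat s.ω).det ≠ 0 ∨
    (¬(s.e 0 = true ∧ weakSepIsU s.ω) ∧ ¬(s.e 1 = true ∧ weakSepIsV s.ω)))

/-- An `ℰ`-tangent saddle-node: an `ℰ`-simple singularity which is not
`ℰ`-well oriented. -/
def ETangentSN (s : St) : Prop := ESimple s ∧ ¬ EWellOriented s

/-- Pull-back of the `1`-form `ω` under the formal map `φ`. -/
def pull (φ : Fin 2 → O2) (ω : Form2) : Form2 :=
  fun i => ∑ j, FPS.subst φ (ω j) * FPS.pderiv i (φ j)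

/-- Saturation: divide both components by the maximal common power of `xᵢ`. -/
def satForm (i : Fin 2) (ω : Form2) : Form2 :=
  fun j => FPS.xDiv i (min (FPS.ordAlong i (ω 0)) (FPS.ordAlong i (ω 1))).toNat (ω j)

/-- The blow-up chart at the point `[1 : c]` of the exceptional line:
`(u,v) ↦ (u, u(v+c))`. -/
def mapT (c : ℂ) : Fin 2 → O2 := ![U, U * (V + MvPowerSeries.C (σ := Fin 2) (R := ℂ) c)]

/-- The blow-up chart at the point `[0 : 1]`: `(u,v) ↦ (uv, v)`. -/
def mapS : Fin 2 → O2 := ![U * V, V]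

/-- The transformed state at the point `[1 : c]` of the exceptional divisor
(the exceptional line becomes `{u = 0}`; the strict transform of `{v = 0}`
passes through this point only when `c = 0`). -/
def stT (c : ℂ) (s : St) : St :=
  ⟨satForm 0 (pull (mapT c) s.ω), ![true, decide (c = 0) && s.e 1]⟩

/-- The transformed state at the point `[0 : 1]` of the exceptional divisor. -/
def stS (s : St) : St :=
  ⟨satForm 1 (pull mapS s.ω), ![s.e 0, true]⟩

/-- The shape of a finite composition of blow-ups over the origin, recorded
through all of its chart germs at the points of the total exceptional
divisor. -/
inductive RedT : Type where
  | leaf : RedT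
  | blow : (ℂ → RedT) → RedT → RedT

/-- The final states (germs at the points of the final divisor) of the
composition of blow-ups `T` applied to the state `s`. -/
def leaves : RedT → St → Set St
  | .leaf, s => {s}
  | .blow f g, s => (⋃ c : ℂ, leaves (f c) (stT c s)) ∪ leaves g (stS s)

/-- A reduction of singularities: after the blow-ups, every point of the
divisor is `ℰ`-simple or `ℰ`-regular. -/
def IsReduction (T : RedT) (s : St) : Prop :=
  ∀ l ∈ leaves T s, ESimple l ∨ ERegular l

/-- All singularities in the final models are well oriented. -/
def AllWellOriented (T : RedT) (s : St) : Prop :=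
  ∀ l ∈ leaves T s, IsSing l.ω → EWellOriented l

/-- All components of the final divisor are invariant (non-dicriticalness). -/
def AllInvariant (T : RedT) (s : St) : Prop :=
  ∀ l ∈ leaves T s, (l.e 0 = true → uInvariant l.ω) ∧ (l.e 1 = true → vInvariant l.ω)

/-- `𝒢` is `ℰ`-second type: in an `ℰ`-reduction of singularities all
singularities of the transformed foliation are well oriented w.r.t. the
total divisor. -/
def ESecondType (s : St) : Prop :=
  ∃ T : RedT, IsReduction T s ∧ AllWellOriented T s

/-- A second type foliation germ at `(ℂ²,0)`. -/
def SecondType (ω : Form2) : Prop := ESecondType ⟨ω, fun _ => false⟩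

/-- A non-dicritical foliation germ at `(ℂ²,0)`: the divisor of a reduction
of singularities is invariant. -/
def NonDicritical (ω : Form2) : Prop :=
  ∃ T : RedT, IsReduction T ⟨ω, fun _ => false⟩ ∧ AllInvariant T ⟨ω, fun _ => false⟩

end Fol2
/-! ### Germs of codimension one holomorphic (formal) foliations at `(ℂ³,0)`

A foliation germ is given by an integrable `1`-form
`ω 0 dx + ω 1 dy + ω 2 dz` with coefficients in `ℂ[[x,y,z]]`.  We develop:
invariant surfaces and separatrices, the simple formal models (A), (B1),
(B2), (B3) and the two-dimensional (cylinder) models (a), (b1), (b2),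
divisors encoded by flags on the coordinate planes, blow-up charts with
point centers and non-singular curve centers, reduction of singularities,
non-dicritical foliations and foliations of second type. -/

namespace Fol3

open FPS

abbrev O3 := FPS 3

/-- A formal `1`-form `A dx + B dy + C dz` at `(ℂ³,0)`. -/
abbrev Form3 := Fin 3 → O3

def X (i : Fin 3) : O3 := MvPowerSeries.X i
def cC (a : ℂ) : O3 := MvPowerSeries.C (σ := Fin 3) (R := ℂ) a
def ccoeff (f : O3) : ℂ := MvPowerSeries.constantCoeff (σ := Fin 3) (R := ℂ) f

/-- The origin is a singular point. -/
def IsSing (ω : Form3) : Prop := ∀ i, ccoeff (ω i) = 0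

/-- The coefficients have no common non-unit factor. -/
def Reduced (ω : Form3) : Prop := ∀ d : O3, (∀ i, d ∣ ω i) → IsUnit d

/-- The integrability condition `ω ∧ dω = 0`. -/
def Integrable (ω : Form3) : Prop :=
  ω 0 * (FPS.pderiv 1 (ω 2) - FPS.pderiv 2 (ω 1))
    - ω 1 * (FPS.pderiv 0 (ω 2) - FPS.pderiv 2 (ω 0))
    + ω 2 * (FPS.pderiv 0 (ω 1) - FPS.pderiv 1 (ω 0)) = 0

/-- The formal surface `{f = 0}` is invariant: `ω ∧ df = (f h) θ`. -/
def IsInvSurface (ω : Form3) (f : O3) : Prop :=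
  (∃ h : O3, ω 0 * FPS.pderiv 1 f - ω 1 * FPS.pderiv 0 f = f * h) ∧
  (∃ h : O3, ω 0 * FPS.pderiv 2 f - ω 2 * FPS.pderiv 0 f = f * h) ∧
  (∃ h : O3, ω 1 * FPS.pderiv 2 f - ω 2 * FPS.pderiv 1 f = f * h)

/-- A separatrix: an invariant formal irreducible surface. -/
def IsSep (ω : Form3) (f : O3) : Prop := Irreducible f ∧ IsInvSurface ω f

/-- The coordinate plane `{xᵢ = 0}` is invariant. -/
def planeInv (i : Fin 3) (ω : Form3) : Prop := ∀ j, j ≠ i → X i ∣ ω j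

/-- A formal curve, given by a parametrization `γ`, is invariant: `γ*ω ≡ 0`. -/
def IsInvCurve (ω : Form3) (γ : Fin 3 → PowerSeries ℂ) : Prop :=
  (∀ i, PowerSeries.constantCoeff (R := ℂ) (γ i) = 0) ∧ (∃ i, γ i ≠ 0) ∧
  ∑ i, FPS.substCurve (ω i) γ * PowerSeries.derivativeFun (γ i) = 0

/-! #### The simple formal models -/

/-- Model (A): `ω = xyz (λ₁ dx/x + λ₂ dy/y + λ₃ dz/z)` (up to a unit), no
non-negative integer resonances. -/
def IsModelA (ω : Form3) : Prop :=
  ∃ (u : O3ˣ) (l1 l2 l3 : ℂ),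
    (∀ m1 m2 m3 : ℕ, ¬(m1 = 0 ∧ m2 = 0 ∧ m3 = 0) →
      (m1 : ℂ) * l1 + (m2 : ℂ) * l2 + (m3 : ℂ) * l3 ≠ 0) ∧
    ω 0 = ↑u * (cC l1 * (X 1 * X 2)) ∧
    ω 1 = ↑u * (cC l2 * (X 0 * X 2)) ∧
    ω 2 = ↑u * (cC l3 * (X 0 * X 1))

/-- Model (B1): `ω = xyz (p₁ dx/x + φ(x^{p₁})(λ₂ dy/y + λ₃ dz/z))`. -/
def IsModelB1 (ω : Form3) : Prop :=
  ∃ (u : O3ˣ) (p1 : ℕ) (φ : PowerSeries ℂ) (l2 l3 : ℂ),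
    0 < p1 ∧ PowerSeries.constantCoeff (R := ℂ) φ = 0 ∧
    (∀ m2 m3 : ℕ, ¬(m2 = 0 ∧ m3 = 0) → (m2 : ℂ) * l2 + (m3 : ℂ) * l3 ≠ 0) ∧
    ω 0 = ↑u * (cC (p1 : ℂ) * (X 1 * X 2)) ∧
    ω 1 = ↑u * (cC l2 * FPS.subst1 φ (X 0 ^ p1) * (X 0 * X 2)) ∧
    ω 2 = ↑u * (cC l3 * FPS.subst1 φ (X 0 ^ p1) * (X 0 * X 1))

/-- Model (B2): `ω = xyz (p₁ dx/x + p₂ dy/y + φ(x^{p₁}y^{p₂})(λ₂ dy/y + λ₃ dz/z))`. -/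
def IsModelB2 (ω : Form3) : Prop :=
  ∃ (u : O3ˣ) (p1 p2 : ℕ) (φ : PowerSeries ℂ) (l2 l3 : ℂ),
    0 < p1 ∧ 0 < p2 ∧ PowerSeries.constantCoeff (R := ℂ) φ = 0 ∧
    (∀ m2 m3 : ℕ, ¬(m2 = 0 ∧ m3 = 0) → (m2 : ℂ) * l2 + (m3 : ℂ) * l3 ≠ 0) ∧
    ω 0 = ↑u * (cC (p1 : ℂ) * (X 1 * X 2)) ∧
    ω 1 = ↑u * ((cC (p2 : ℂ) + cC l2 * FPS.subst1 φ (X 0 ^ p1 * X 1 ^ p2)) * (X 0 * X 2)) ∧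
    ω 2 = ↑u * (cC l3 * FPS.subst1 φ (X 0 ^ p1 * X 1 ^ p2) * (X 0 * X 1))

/-- Model (B3): `ω = xyz (p₁ dx/x + p₂ dy/y + p₃ dz/z +
φ(x^{p₁}y^{p₂}z^{p₃})(λ₂ dy/y + λ₃ dz/z))`. -/
def IsModelB3 (ω : Form3) : Prop :=
  ∃ (u : O3ˣ) (p1 p2 p3 : ℕ) (φ : PowerSeries ℂ) (l2 l3 : ℂ),
    0 < p1 ∧ 0 < p2 ∧ 0 < p3 ∧ PowerSeries.constantCoeff (R := ℂ) φ = 0 ∧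
    (∀ m2 m3 : ℕ, ¬(m2 = 0 ∧ m3 = 0) → (m2 : ℂ) * l2 + (m3 : ℂ) * l3 ≠ 0) ∧
    ω 0 = ↑u * (cC (p1 : ℂ) * (X 1 * X 2)) ∧
    ω 1 = ↑u * ((cC (p2 : ℂ) + cC l2 * FPS.subst1 φ (X 0 ^ p1 * X 1 ^ p2 * X 2 ^ p3)) * (X 0 * X 2)) ∧
    ω 2 = ↑u * ((cC (p3 : ℂ) + cC l3 * FPS.subst1 φ (X 0 ^ p1 * X 1 ^ p2 * X 2 ^ p3)) * (X 0 * X 1))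

/-- Cylinder over the two-dimensional model (a). -/
def IsModel2a (ω : Form3) : Prop :=
  ∃ (u : O3ˣ) (l1 l2 : ℂ),
    (∀ m1 m2 : ℕ, ¬(m1 = 0 ∧ m2 = 0) → (m1 : ℂ) * l1 + (m2 : ℂ) * l2 ≠ 0) ∧
    ω 0 = ↑u * (cC l1 * X 1) ∧ ω 1 = ↑u * (cC l2 * X 0) ∧ ω 2 = 0

/-- Cylinder over the two-dimensional saddle-node model (b1). -/
def IsModel2b1 (ω : Form3) : Prop :=
  ∃ (u : O3ˣ) (φ : PowerSeries ℂ),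
    PowerSeries.constantCoeff (R := ℂ) φ = 0 ∧
    ω 0 = ↑u * X 1 ∧ ω 1 = ↑u * (X 0 * FPS.subst1 φ (X 0)) ∧ ω 2 = 0

/-- Cylinder over the two-dimensional model (b2). -/
def IsModel2b2 (ω : Form3) : Prop :=
  ∃ (u : O3ˣ) (p1 p2 : ℕ) (φ : PowerSeries ℂ),
    0 < p1 ∧ 0 < p2 ∧ PowerSeries.constantCoeff (R := ℂ) φ = 0 ∧
    ω 0 = ↑u * (cC (p1 : ℂ) * X 1) ∧
    ω 1 = ↑u * ((cC (p2 : ℂ) + FPS.subst1 φ (X 0 ^ p1 * X 1 ^ p2)) * X 0) ∧ ω 2 = 0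

/-- A simple model of dimensional type three. -/
def Is3DModel (ω : Form3) : Prop :=
  IsModelA ω ∨ IsModelB1 ω ∨ IsModelB2 ω ∨ IsModelB3 ω

/-- A simple model of dimensional type two (an analytic cylinder over a
simple two-dimensional singularity). -/
def Is2DModel (ω : Form3) : Prop :=
  IsModel2a ω ∨ IsModel2b1 ω ∨ IsModel2b2 ω

/-- A simple (complex hyperbolic or saddle-node) model. -/
def IsSimpleModel (ω : Form3) : Prop := Is3DModel ω ∨ Is2DModel ω

/-- The complex hyperbolic simple models. -/
def IsCHModel (ω : Form3) : Prop :=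
  IsModelA ω ∨ IsModelB3 ω ∨ IsModel2a ω ∨ IsModel2b2 ω

/-! #### States: foliation, divisor flags and an auxiliary surface -/

/-- A local state: a foliation germ, a normal crossings divisor contained in
the coordinate planes (encoded by flags) and an auxiliary formal surface
(used to follow the strict transform of a fixed separatrix set). -/
structure St where
  ω : Form3
  e : Fin 3 → Bool
  sep : O3

/-- Adaptedness of the simple models to the divisor: for the dimensional type
three models the (invariant) divisor has two or three components; for the
cylinder models at least one of the two invariant coordinate planes belongs
to the divisor (and `{z = 0}` may occur as a dicritical component). -/
def ModelAdapted (s : St) : Prop :=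
  (Is3DModel s.ω ∧ 2 ≤ (Finset.univ.filter fun i => s.e i = true).card) ∨
  (Is2DModel s.ω ∧ (s.e 0 = true ∨ s.e 1 = true))

/-- Well orientation of an adapted simple model: no weak separatrix of a
saddle-node is contained in the divisor.  The weak separatrices are
`{y = 0}` and `{z = 0}` for (B1), `{z = 0}` for (B2) and `{y = 0}` for the
cylinder over (b1). -/
def ModelWellOriented (s : St) : Prop :=
  (IsModelB1 s.ω → (s.e 1 = false ∧ s.e 2 = false)) ∧
  (IsModelB2 s.ω → s.e 2 = false) ∧
  (IsModel2b1 s.ω → s.e 1 = false)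

/-- Pull-back of a `1`-form under a formal map `(ℂ³,0) → (ℂ³,0)`. -/
def pull3 (φ : Fin 3 → O3) (ω : Form3) : Form3 :=
  fun i => ∑ j, FPS.subst φ (ω j) * FPS.pderiv i (φ j)

/-- A formal change of coordinates preserving the flagged divisor. -/
def IsChg (s : St) (Φ : Fin 3 → O3) : Prop :=
  (∀ i, ccoeff (Φ i) = 0) ∧
  (∃ Ψ : Fin 3 → O3, (∀ i, ccoeff (Ψ i) = 0) ∧
    (∀ i, FPS.subst Ψ (Φ i) = X i) ∧ (∀ i, FPS.subst Φ (Ψ i) = X i)) ∧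
  (∀ i, s.e i = true → ∃ w : O3, IsUnit w ∧ Φ i = X i * w)

/-- Equivalence of states by a formal change of coordinates preserving the
divisor (up to a permutation of the coordinates) and the foliation up to a
unit factor. -/
def ChangeTo (s t : St) : Prop :=
  ∃ (Φ : Fin 3 → O3) (σ : Equiv.Perm (Fin 3)) (u : O3ˣ),
    (∀ i, ccoeff (Φ i) = 0) ∧
    (∃ Ψ : Fin 3 → O3, (∀ i, ccoeff (Ψ i) = 0) ∧
      (∀ i, FPS.subst Ψ (Φ i) = X i) ∧ (∀ i, FPS.subst Φ (Ψ i) = X i)) ∧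
    (∀ i, t.e (σ i) = s.e i) ∧
    (∀ i, s.e i = true → ∃ w : O3, IsUnit w ∧ Φ (σ i) = X i * w) ∧
    (∀ i, pull3 Φ t.ω i = ↑u * s.ω i)

/-- The state `s` is `𝒟`-simple: in suitable formal coordinates adapted to
the divisor it is given by one of the simple models. -/
def DSimple (s : St) : Prop := ∃ t : St, ChangeTo s t ∧ ModelAdapted t

/-- The state `s` is `𝒟`-simple and `𝒟`-well oriented. -/
def DWellOriented (s : St) : Prop :=
  ∃ t : St, ChangeTo s t ∧ ModelAdapted t ∧ ModelWellOriented t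

/-- The state `s` is a `𝒟`-tangent saddle-node. -/
def DTangentSN (s : St) : Prop := DSimple s ∧ ¬ DWellOriented s

/-- The state `s` is `𝒟`-regular: a regular point of the foliation such that,
in suitable coordinates, the foliation is `dx = 0` and the dicritical part of
the divisor is contained in `{yz = 0}`; concretely, every component of the
divisor is invariant or transverse to the foliation, and the intersection
curve of two dicritical components is transverse to the foliation. -/
def DRegular (s : St) : Prop :=
  (∃ i, ccoeff (s.ω i) ≠ 0) ∧
  (∀ i, s.e i = true → (planeInv i s.ω ∨ ∃ j, j ≠ i ∧ ccoeff (s.ω j) ≠ 0)) ∧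
  (∀ i j, i ≠ j → s.e i = true → s.e j = true →
    ¬ planeInv i s.ω → ¬ planeInv j s.ω →
    ∀ k, k ≠ i → k ≠ j → ccoeff (s.ω k) ≠ 0)

/-! #### Blow-up charts -/

/-- Saturation of a `1`-form: divide the three components by the maximal
common power of `xᵢ`. -/
def satForm3 (i : Fin 3) (ω : Form3) : Form3 :=
  fun j => FPS.xDiv i
    (min (min (FPS.ordAlong i (ω 0)) (FPS.ordAlong i (ω 1))) (FPS.ordAlong i (ω 2))).toNat
    (ω j)

/-- Chart of the blow-up of the origin at the point `[1 : b : c]` of the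
exceptional plane: `(x,y,z) ↦ (x, x(y+b), x(z+c))`. -/
def mapPt0 (b c : ℂ) : Fin 3 → O3 :=
  ![X 0, X 0 * (X 1 + cC b), X 0 * (X 2 + cC c)]

/-- Chart at the point `[0 : 1 : c]`: `(x,y,z) ↦ (xy, y, y(z+c))`. -/
def mapPt1 (c : ℂ) : Fin 3 → O3 :=
  ![X 0 * X 1, X 1, X 1 * (X 2 + cC c)]

/-- Chart at the point `[0 : 0 : 1]`: `(x,y,z) ↦ (xz, yz, z)`. -/
def mapPt2 : Fin 3 → O3 := ![X 0 * X 2, X 1 * X 2, X 2]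

/-- Chart of the blow-up of the `z`-axis at the point `[1 : b]` of the
exceptional fiber over the origin: `(x,y,z) ↦ (x, x(y+b), z)`. -/
def mapAx0 (b : ℂ) : Fin 3 → O3 := ![X 0, X 0 * (X 1 + cC b), X 2]

/-- Chart of the blow-up of the `z`-axis at the point `[0 : 1]`:
`(x,y,z) ↦ (xy, y, z)`. -/
def mapAx1 : Fin 3 → O3 := ![X 0 * X 1, X 1, X 2]

def stPt0 (b c : ℂ) (s : St) : St :=
  ⟨satForm3 0 (pull3 (mapPt0 b c) s.ω),
   ![true, decide (b = 0) && s.e 1, decide (c = 0) && s.e 2],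
   FPS.xSat 0 (FPS.subst (mapPt0 b c) s.sep)⟩

def stPt1 (c : ℂ) (s : St) : St :=
  ⟨satForm3 1 (pull3 (mapPt1 c) s.ω),
   ![s.e 0, true, decide (c = 0) && s.e 2],
   FPS.xSat 1 (FPS.subst (mapPt1 c) s.sep)⟩

def stPt2 (s : St) : St :=
  ⟨satForm3 2 (pull3 mapPt2 s.ω), ![s.e 0, s.e 1, true],
   FPS.xSat 2 (FPS.subst mapPt2 s.sep)⟩

def stAx0 (b : ℂ) (s : St) : St :=
  ⟨satForm3 0 (pull3 (mapAx0 b) s.ω),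
   ![true, decide (b = 0) && s.e 1, s.e 2],
   FPS.xSat 0 (FPS.subst (mapAx0 b) s.sep)⟩

def stAx1 (s : St) : St :=
  ⟨satForm3 1 (pull3 mapAx1 s.ω), ![s.e 0, true, s.e 2],
   FPS.xSat 1 (FPS.subst mapAx1 s.sep)⟩

/-- Relabelling of the coordinates by a permutation. -/
def stPerm (σ : Equiv.Perm (Fin 3)) (s : St) : St :=
  ⟨pull3 (fun j => X (σ j)) s.ω, fun i => s.e (σ⁻¹ i),
   FPS.subst (fun j => X (σ j)) s.sep⟩

/-- A formal change of coordinates applied to a state. -/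
def stChg (Φ : Fin 3 → O3) (s : St) : St :=
  ⟨pull3 Φ s.ω, s.e, FPS.subst Φ s.sep⟩

/-- The `z`-axis is invariant by the foliation. -/
def zAxisInvariant (ω : Form3) : Prop :=
  FPS.substCurve (ω 2) ![0, 0, PowerSeries.X] = 0

/-! #### Compositions of blow-ups and reduction of singularities -/

/-- The shape of a finite composition of blow-ups with non-singular centers
(points, or smooth curves brought to the `z`-axis by changes of coordinates),
recorded through all of its chart germs at the points of the final divisor
lying over the origin. -/
inductive RedT : Type where
  | leaf : RedT
  | pt : (ℂ → ℂ → RedT) → (ℂ → RedT) → RedT → RedT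
  | ax : (ℂ → RedT) → RedT → RedT
  | perm : Equiv.Perm (Fin 3) → RedT → RedT
  | chg : (Fin 3 → O3) → RedT → RedT

/-- The final states (germs at the points of the final divisor over the
origin) of the composition of blow-ups `T` applied to the state `s`. -/
def leaves : RedT → St → Set St
  | .leaf, s => {s}
  | .pt f g h, s => (⋃ b, ⋃ c, leaves (f b c) (stPt0 b c s)) ∪
      (⋃ c, leaves (g c) (stPt1 c s)) ∪ leaves h (stPt2 s)
  | .ax f g, s => (⋃ b, leaves (f b) (stAx0 b s)) ∪ leaves g (stAx1 s)
  | .perm σ f, s => leaves f (stPerm σ s)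
  | .chg Φ f, s => leaves f (stChg Φ s)

/-- All changes of coordinates used in the process are legitimate (invertible
and preserving the divisor), so that `T` is an honest composition of blow-ups
with non-singular centers. -/
def ValidCharts : RedT → St → Prop
  | .leaf, _ => True
  | .pt f g h, s => (∀ b c, ValidCharts (f b c) (stPt0 b c s)) ∧
      (∀ c, ValidCharts (g c) (stPt1 c s)) ∧ ValidCharts h (stPt2 s)
  | .ax f g, s => (∀ b, ValidCharts (f b) (stAx0 b s)) ∧ ValidCharts g (stAx1 s)
  | .perm σ f, s => ValidCharts f (stPerm σ s)
  | .chg Φ f, s => IsChg s Φ ∧ ValidCharts f (stChg Φ s)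

/-- All one-dimensional blow-up centers are invariant by the (transformed)
foliation. -/
def InvCenters : RedT → St → Prop
  | .leaf, _ => True
  | .pt f g h, s => (∀ b c, InvCenters (f b c) (stPt0 b c s)) ∧
      (∀ c, InvCenters (g c) (stPt1 c s)) ∧ InvCenters h (stPt2 s)
  | .ax f g, s => zAxisInvariant s.ω ∧
      (∀ b, InvCenters (f b) (stAx0 b s)) ∧ InvCenters g (stAx1 s)
  | .perm σ f, s => InvCenters f (stPerm σ s)
  | .chg Φ f, s => InvCenters f (stChg Φ s)

/-- A reduction of singularities: an honest composition of blow-ups whose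
centers are invariant and such that, at the end of the process, every point
of the divisor is `𝒟`-simple or `𝒟`-regular. -/
def IsReduction (T : RedT) (s : St) : Prop :=
  ValidCharts T s ∧ InvCenters T s ∧ ∀ l ∈ leaves T s, DSimple l ∨ DRegular l

/-- All singularities of the final transformed foliation are well oriented
with respect to the final divisor. -/
def AllWellOriented (T : RedT) (s : St) : Prop :=
  ∀ l ∈ leaves T s, IsSing l.ω → DWellOriented l

/-- All components of the final divisor are invariant. -/
def AllInvariantDiv (T : RedT) (s : St) : Prop :=
  ∀ l ∈ leaves T s, ∀ i, l.e i = true → planeInv i l.ω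

/-- The initial state of a foliation germ (empty divisor), following the
strict transform of the auxiliary surface `{f₀ = 0}`. -/
def st0 (ω : Form3) (f₀ : O3) : St := ⟨ω, fun _ => false, f₀⟩

/-- A second type foliation germ at `(ℂ³,0)`: there exists a reduction of
singularities in which all singularities are well oriented with respect to
the divisor. -/
def SecondType (ω : Form3) : Prop :=
  ∃ T : RedT, IsReduction T (st0 ω 1) ∧ AllWellOriented T (st0 ω 1)

/-- A non-dicritical foliation germ at `(ℂ³,0)`: the divisor of a reduction
of singularities is invariant by the transformed foliation. -/
def NonDicritical (ω : Form3) : Prop :=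
  ∃ T : RedT, IsReduction T (st0 ω 1) ∧ AllInvariantDiv T (st0 ω 1)

/-! #### Separatrices and multiplicities -/

/-- `f = 0` is a reduced equation of the set of separatrices `Sep₀(ℱ)`. -/
def ReducedSepEquation (ω : Form3) (f : O3) : Prop :=
  f ≠ 0 ∧ ccoeff f = 0 ∧ Squarefree f ∧
  (∀ g : O3, Irreducible g → g ∣ f → IsSep ω g) ∧
  (∀ g : O3, IsSep ω g → g ∣ f)

/-- The algebraic multiplicity `ν₀` of a foliation germ. -/
def nu (ω : Form3) : ℕ∞ :=
  min (min (FPS.ord (ω 0)) (FPS.ord (ω 1))) (FPS.ord (ω 2))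

/-- The algebraic multiplicity `ν₀(df)` of the differential of `f`. -/
def nuD (f : O3) : ℕ∞ :=
  min (min (FPS.ord (FPS.pderiv 0 f)) (FPS.ord (FPS.pderiv 1 f)))
    (FPS.ord (FPS.pderiv 2 f))

end Fol3
/-! ### Two-dimensional sections of three-dimensional foliations -/

namespace Glue

open FPS

/-- Pull-back of a `1`-form at `(ℂ³,0)` under a formal map `(ℂ²,0) → (ℂ³,0)`
with components `φ`. -/
def pull32 (φ : Fin 3 → Fol2.O2) (ω : Fol3.Form3) : Fol2.Form2 :=
  fun i => ∑ j, FPS.subst φ (ω j) * FPS.pderiv i (φ j)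

/-- `φ(ℰ) ⊂ 𝒟`: each flagged component of `ℰ` is mapped into some flagged
component of `𝒟`. -/
def MapsDivisorTo (φ : Fin 3 → Fol2.O2) (e : Fin 2 → Bool) (d : Fin 3 → Bool) : Prop :=
  (e 0 = true → ∃ i, d i = true ∧ Fol2.U ∣ φ i) ∧
  (e 1 = true → ∃ i, d i = true ∧ Fol2.V ∣ φ i)

/-- `φ(ℰ) ⊂ Sing(ℱ)`: each flagged component of `ℰ` is mapped into the
singular set of `ω`. -/
def MapsDivisorToSing (φ : Fin 3 → Fol2.O2) (e : Fin 2 → Bool) (ω : Fol3.Form3) : Prop :=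
  (e 0 = true → ∀ j, Fol2.U ∣ FPS.subst φ (ω j)) ∧
  (e 1 = true → ∀ j, Fol2.V ∣ FPS.subst φ (ω j))

end Glue

/-! ### STATEMENT 6
Pull-back of the saddle-node model (B2) under a formal map
`φ = (u^{r₁}v^{s₁}φ̃₁, u^{r₂}v^{s₂}φ̃₂, u^{r₃}v^{s₃}φ̃₃)`; the case
`r = p₁r₁ + p₂r₂ > 0` and `s = p₁s₁ + p₂s₂ > 0`:
`uv·φ*ω̃ = r v du + s u dv + uv θ`, and the pulled-back foliation has a
simple non-degenerate singularity at the origin.  (We write the meromorphic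
identity holomorphically: `ω = xyz·ω̃`, so that
`uv · φ*ω = (φ₁φ₂φ₃) · (r v du + s u dv + uv θ)`.) -/


namespace Aux
open FPS

variable {n k l : ℕ}

lemma coeffw (f : FPS n) (m : Fin n →₀ ℕ) : MvPowerSeries.coeff m f = f m := rfl

lemma mdeg_add (p q : Fin n →₀ ℕ) : mdeg (p + q) = mdeg p + mdeg q :=
  Finsupp.sum_add_index' (fun _ => rfl) (fun _ _ _ => rfl)

lemma mdeg_eq_sum (m : Fin n →₀ ℕ) : mdeg m = ∑ i, m i :=
  Finsupp.sum_fintype _ _ (fun _ => rfl)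

lemma mdeg_single (i : Fin n) (a : ℕ) : mdeg (Finsupp.single i a) = a :=
  Finsupp.sum_single_index rfl

lemma eq_zero_of_mdeg_eq_zero {m : Fin n →₀ ℕ} (h : mdeg m = 0) : m = 0 := by
  rw [mdeg_eq_sum] at h
  ext i
  simpa using (Finset.sum_eq_zero_iff.mp h i (Finset.mem_univ i))

/-- `f` has no monomials of total degree `< a`. -/
def LB (a : ℕ) (f : FPS n) : Prop :=
  ∀ m : Fin n →₀ ℕ, mdeg m < a → MvPowerSeries.coeff m f = 0

lemma LB_zero (f : FPS n) : LB 0 f := fun _ h => absurd h (Nat.not_lt_zero _)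

lemma LB_one {f : FPS n} (h : MvPowerSeries.constantCoeff (σ := Fin n) (R := ℂ) f = 0) : LB 1 f := by
  intro m hm
  have hm0 : m = 0 := eq_zero_of_mdeg_eq_zero (Nat.lt_one_iff.mp hm)
  subst hm0
  simpa [MvPowerSeries.coeff_zero_eq_constantCoeff] using h

lemma LB_mul {a b : ℕ} {f g : FPS n} (hf : LB a f) (hg : LB b g) : LB (a + b) (f * g) := by
  intro m hm
  rw [MvPowerSeries.coeff_mul]
  refine Finset.sum_eq_zero fun p hp => ?_
  rw [Finset.HasAntidiagonal.mem_antidiagonal] at hp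
  have hsum : mdeg p.1 + mdeg p.2 < a + b := by rw [← mdeg_add, hp]; exact hm
  rcases Nat.lt_or_ge (mdeg p.1) a with h | h
  · rw [hf _ h, zero_mul]
  · rw [hg _ (by omega), mul_zero]

lemma LB_pow {f : FPS n} (hf : LB 1 f) : ∀ e : ℕ, LB e (f ^ e)
  | 0 => by simpa using LB_zero (1 : FPS n)
  | e + 1 => by rw [pow_succ]; exact LB_mul (LB_pow hf e) hf

lemma LB_prod {φ : Fin k → FPS n} (hφ : ∀ i, LB 1 (φ i)) (e : Fin k → ℕ)
    (s : Finset (Fin k)) : LB (∑ i ∈ s, e i) (∏ i ∈ s, φ i ^ e i) := by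
  induction s using Finset.induction with
  | empty => simpa using LB_zero (1 : FPS n)
  | @insert j t hj ih =>
      rw [Finset.sum_insert hj, Finset.prod_insert hj]
      exact LB_mul (LB_pow (hφ j) _) ih

lemma coeff_prod_pow_eq_zero {φ : Fin k → FPS l}
    (hφ : ∀ i, MvPowerSeries.constantCoeff (σ := Fin l) (R := ℂ) (φ i) = 0)
    {e : Fin k →₀ ℕ} {m : Fin l →₀ ℕ} (h : mdeg m < mdeg e) :
    MvPowerSeries.coeff m (∏ i, φ i ^ e i) = 0 := by
  refine LB_prod (fun i => LB_one (hφ i)) (fun i => e i) Finset.univ m ?_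
  rwa [← mdeg_eq_sum]

/-- The constant exponent bound used in `FPS.subst`. -/
def bnd (k N : ℕ) : Fin k →₀ ℕ := Finsupp.equivFunOnFinite.symm fun _ => N

@[simp] lemma bnd_apply (k N : ℕ) (i : Fin k) : bnd k N i = N := rfl

lemma mem_Iic_bnd {e : Fin k →₀ ℕ} {N : ℕ} (h : mdeg e ≤ N) : e ∈ Finset.Iic (bnd k N) := by
  rw [Finset.mem_Iic]
  intro i
  refine le_trans ?_ h
  rw [mdeg_eq_sum]
  exact Finset.single_le_sum (f := fun j => e j) (fun _ _ => Nat.zero_le _) (Finset.mem_univ i)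

lemma coeff_subst_def (φ : Fin k → FPS l) (f : FPS k) (m : Fin l →₀ ℕ) :
    MvPowerSeries.coeff m (subst φ f) =
      ∑ e ∈ Finset.Iic (bnd k (mdeg m)),
        MvPowerSeries.coeff e f * MvPowerSeries.coeff m (∏ i, (φ i) ^ (e i)) := rfl

lemma coeff_subst_eq {φ : Fin k → FPS l}
    (hφ : ∀ i, MvPowerSeries.constantCoeff (σ := Fin l) (R := ℂ) (φ i) = 0)
    (f : FPS k) (m : Fin l →₀ ℕ) {N : ℕ} (hN : mdeg m ≤ N) :
    MvPowerSeries.coeff m (subst φ f) =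
      ∑ e ∈ Finset.Iic (bnd k N),
        MvPowerSeries.coeff e f * MvPowerSeries.coeff m (∏ i, (φ i) ^ (e i)) := by
  rw [coeff_subst_def]
  refine Finset.sum_subset ?_ ?_
  · intro e he
    rw [Finset.mem_Iic] at he ⊢
    exact fun i => le_trans (he i) hN
  · intro e _ hne
    have hgt : mdeg m < mdeg e := by
      by_contra hle
      exact hne (mem_Iic_bnd (Nat.le_of_not_lt (fun hc => hle (by omega))))
    rw [coeff_prod_pow_eq_zero hφ hgt, mul_zero]

end Aux

namespace Aux
open FPS

variable {n k l : ℕ}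

lemma subst_add (φ : Fin k → FPS l) (f g : FPS k) :
    subst φ (f + g) = subst φ f + subst φ g := by
  apply MvPowerSeries.ext; intro m
  rw [map_add, coeff_subst_def, coeff_subst_def, coeff_subst_def, ← Finset.sum_add_distrib]
  refine Finset.sum_congr rfl fun e _ => ?_
  rw [map_add, add_mul]

lemma prod_pow_zero (φ : Fin k → FPS l) :
    (∏ i, (φ i) ^ ((0 : Fin k →₀ ℕ) i)) = 1 := by
  simp

lemma subst_C (φ : Fin k → FPS l) (a : ℂ) :
    subst φ (MvPowerSeries.C (σ := Fin k) (R := ℂ) a) = MvPowerSeries.C (σ := Fin l) (R := ℂ) a := by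
  apply MvPowerSeries.ext; intro m
  rw [coeff_subst_def, Finset.sum_eq_single (0 : Fin k →₀ ℕ)]
  · rw [prod_pow_zero]
    simp [MvPowerSeries.coeff_C, MvPowerSeries.coeff_one]
  · intro e _ hne
    rw [MvPowerSeries.coeff_C, if_neg hne, zero_mul]
  · intro h
    exact absurd (Finset.mem_Iic.mpr (fun i => Nat.zero_le _)) h

lemma subst_one (φ : Fin k → FPS l) : subst φ (1 : FPS k) = 1 := by
  simpa using subst_C φ 1

lemma prod_pow_single (φ : Fin k → FPS l) (j : Fin k) :
    (∏ i, (φ i) ^ ((Finsupp.single j 1) i)) = φ j := by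
  rw [Finset.prod_eq_single j]
  · simp
  · intro b _ hb
    rw [Finsupp.single_apply, if_neg (fun h => hb h.symm), pow_zero]
  · intro h; exact absurd (Finset.mem_univ j) h

lemma subst_X {φ : Fin k → FPS l}
    (hφ : ∀ i, MvPowerSeries.constantCoeff (σ := Fin l) (R := ℂ) (φ i) = 0) (j : Fin k) :
    subst φ (MvPowerSeries.X j) = φ j := by
  apply MvPowerSeries.ext; intro m
  rcases Nat.eq_zero_or_pos (mdeg m) with h0 | hpos
  · have hm : m = 0 := eq_zero_of_mdeg_eq_zero h0
    subst hm
    rw [coeff_subst_def]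
    rw [Finset.sum_eq_zero, MvPowerSeries.coeff_zero_eq_constantCoeff, hφ j]
    intro e he
    have he0 : e = 0 := by
      rw [Finset.mem_Iic] at he
      have hz : mdeg (0 : Fin l →₀ ℕ) = 0 := Finsupp.sum_zero_index
      ext i
      have hle := he i
      rw [bnd_apply, hz] at hle
      simpa using Nat.le_zero.mp hle
    subst he0
    rw [MvPowerSeries.coeff_X,
      if_neg ?_, zero_mul]
    intro h
    have : Finsupp.single j 1 = (0 : Fin k →₀ ℕ) := h.symm
    rw [Finsupp.single_eq_zero] at this
    exact one_ne_zero this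
  · rw [coeff_subst_def, Finset.sum_eq_single (Finsupp.single j 1)]
    · rw [prod_pow_single, MvPowerSeries.coeff_X, if_pos rfl, one_mul]
    · intro e _ hne
      rw [MvPowerSeries.coeff_X, if_neg (fun h => hne h), zero_mul]
    · intro h
      exact absurd (mem_Iic_bnd (by rw [mdeg_single]; omega)) h

lemma subst_mul {φ : Fin k → FPS l}
    (hφ : ∀ i, MvPowerSeries.constantCoeff (σ := Fin l) (R := ℂ) (φ i) = 0) (f g : FPS k) :
    subst φ (f * g) = subst φ f * subst φ g := by
  classical
  apply MvPowerSeries.ext; intro m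
  set C : Fin k →₀ ℕ := bnd k (mdeg m) with hC
  have key : ∀ p q : Fin k →₀ ℕ, ¬ p + q ≤ C →
      MvPowerSeries.coeff m (∏ i, (φ i) ^ ((p + q) i)) = 0 := by
    intro p q hpq
    refine coeff_prod_pow_eq_zero hφ ?_
    by_contra hle
    exact hpq (Finset.mem_Iic.mp (mem_Iic_bnd (Nat.le_of_not_lt fun hc => hle (by omega))))
  -- RHS
  have hrhs : MvPowerSeries.coeff m (subst φ f * subst φ g) =
      ∑ pq ∈ Finset.Iic C ×ˢ Finset.Iic C,
        MvPowerSeries.coeff pq.1 f * MvPowerSeries.coeff pq.2 g *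
          MvPowerSeries.coeff m (∏ i, (φ i) ^ ((pq.1 + pq.2) i)) := by
    rw [MvPowerSeries.coeff_mul]
    have hstep : ∀ xy ∈ Finset.HasAntidiagonal.antidiagonal m,
        MvPowerSeries.coeff xy.1 (subst φ f) * MvPowerSeries.coeff xy.2 (subst φ g) =
        ∑ pq ∈ Finset.Iic C ×ˢ Finset.Iic C,
          (MvPowerSeries.coeff pq.1 f * MvPowerSeries.coeff xy.1 (∏ i, (φ i) ^ (pq.1 i))) *
          (MvPowerSeries.coeff pq.2 g * MvPowerSeries.coeff xy.2 (∏ i, (φ i) ^ (pq.2 i))) := by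
      intro xy hxy
      rw [Finset.HasAntidiagonal.mem_antidiagonal] at hxy
      have h1 : mdeg xy.1 ≤ mdeg m := by rw [← hxy, mdeg_add]; omega
      have h2 : mdeg xy.2 ≤ mdeg m := by rw [← hxy, mdeg_add]; omega
      rw [coeff_subst_eq hφ f xy.1 h1, coeff_subst_eq hφ g xy.2 h2, Finset.sum_mul_sum]
      rw [Finset.sum_product]
    rw [Finset.sum_congr rfl hstep, Finset.sum_comm]
    refine Finset.sum_congr rfl fun pq _ => ?_
    have : ∀ i, (φ i) ^ ((pq.1 + pq.2) i) = (φ i) ^ (pq.1 i) * (φ i) ^ (pq.2 i) := by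
      intro i; rw [Finsupp.add_apply, pow_add]
    rw [Finset.prod_congr rfl (fun i _ => this i), Finset.prod_mul_distrib,
      MvPowerSeries.coeff_mul, Finset.mul_sum]
    refine Finset.sum_congr rfl fun xy _ => ?_
    ring
  rw [hrhs, coeff_subst_def]
  -- LHS
  have hlhs : ∀ e ∈ Finset.Iic C,
      MvPowerSeries.coeff e (f * g) * MvPowerSeries.coeff m (∏ i, (φ i) ^ (e i)) =
      ∑ pq ∈ Finset.HasAntidiagonal.antidiagonal e,
        MvPowerSeries.coeff pq.1 f * MvPowerSeries.coeff pq.2 g *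
          MvPowerSeries.coeff m (∏ i, (φ i) ^ ((pq.1 + pq.2) i)) := by
    intro e _
    rw [MvPowerSeries.coeff_mul, Finset.sum_mul]
    refine Finset.sum_congr rfl fun pq hpq => ?_
    rw [Finset.HasAntidiagonal.mem_antidiagonal] at hpq
    rw [hpq]
  rw [Finset.sum_congr rfl hlhs, Finset.sum_sigma']
  rw [Finset.sum_nbij' (i := fun x => x.2)
    (j := fun pq => (⟨pq.1 + pq.2, pq⟩ : Σ _ : Fin k →₀ ℕ, (Fin k →₀ ℕ) × (Fin k →₀ ℕ)))
    (t := (Finset.Iic C ×ˢ Finset.Iic C).filter (fun pq => pq.1 + pq.2 ≤ C))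
    (g := fun pq => MvPowerSeries.coeff pq.1 f * MvPowerSeries.coeff pq.2 g *
          MvPowerSeries.coeff m (∏ i, (φ i) ^ ((pq.1 + pq.2) i)))]
  · rw [Finset.sum_filter_of_ne]
    intro pq _ hne
    by_contra hnle
    exact hne (by rw [key pq.1 pq.2 hnle, mul_zero])
  · rintro ⟨e, pq⟩ hmem
    rw [Finset.mem_sigma] at hmem
    obtain ⟨he, hpq⟩ := hmem
    rw [Finset.HasAntidiagonal.mem_antidiagonal] at hpq
    rw [Finset.mem_filter, Finset.mem_product]
    rw [Finset.mem_Iic] at he ⊢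
    refine ⟨⟨fun i => ?_, ?_⟩, ?_⟩
    · calc pq.1 i ≤ pq.1 i + pq.2 i := Nat.le_add_right _ _
        _ = e i := by rw [← Finsupp.add_apply, hpq]
        _ ≤ C i := he i
    · rw [Finset.mem_Iic]
      intro i
      calc pq.2 i ≤ pq.1 i + pq.2 i := Nat.le_add_left _ _
        _ = e i := by rw [← Finsupp.add_apply, hpq]
        _ ≤ C i := he i
    · rw [hpq]; exact he
  · intro pq hpq
    rw [Finset.mem_filter, Finset.mem_product] at hpq
    rw [Finset.mem_sigma]
    exact ⟨Finset.mem_Iic.mpr hpq.2, Finset.HasAntidiagonal.mem_antidiagonal.mpr rfl⟩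
  · rintro ⟨e, pq⟩ hmem
    rw [Finset.mem_sigma] at hmem
    obtain ⟨-, hpq⟩ := hmem
    rw [Finset.HasAntidiagonal.mem_antidiagonal] at hpq
    simp [hpq]
  · intro pq _; rfl
  · rintro ⟨e, pq⟩ _; rfl

lemma subst_pow {φ : Fin k → FPS l}
    (hφ : ∀ i, MvPowerSeries.constantCoeff (σ := Fin l) (R := ℂ) (φ i) = 0) (f : FPS k) :
    ∀ t : ℕ, subst φ (f ^ t) = (subst φ f) ^ t
  | 0 => by rw [pow_zero, pow_zero, subst_one]
  | t + 1 => by rw [pow_succ, pow_succ, subst_mul hφ, subst_pow hφ f t]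

end Aux

namespace Aux
open FPS

variable {n k l : ℕ}

lemma coeff_subst1_def (ψ : PowerSeries ℂ) (g : FPS l) (m : Fin l →₀ ℕ) :
    MvPowerSeries.coeff m (subst1 ψ g) =
      ∑ nn ∈ Finset.range (mdeg m + 1),
        PowerSeries.coeff (R := ℂ) nn ψ * MvPowerSeries.coeff m (g ^ nn) := rfl

lemma subst_subst1 {φ : Fin k → FPS l}
    (hφ : ∀ i, MvPowerSeries.constantCoeff (σ := Fin l) (R := ℂ) (φ i) = 0)
    {F : FPS k} (hF : MvPowerSeries.constantCoeff (σ := Fin k) (R := ℂ) F = 0) (ψ : PowerSeries ℂ) :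
    subst φ (subst1 ψ F) = subst1 ψ (subst φ F) := by
  apply MvPowerSeries.ext; intro m
  rw [coeff_subst_def, coeff_subst1_def]
  have hstep : ∀ e ∈ Finset.Iic (bnd k (mdeg m)),
      MvPowerSeries.coeff e (subst1 ψ F) * MvPowerSeries.coeff m (∏ i, (φ i) ^ (e i)) =
      ∑ nn ∈ Finset.range (mdeg m + 1),
        PowerSeries.coeff (R := ℂ) nn ψ * MvPowerSeries.coeff e (F ^ nn) *
          MvPowerSeries.coeff m (∏ i, (φ i) ^ (e i)) := by
    intro e _
    rw [coeff_subst1_def, Finset.sum_mul]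
    rcases le_or_gt (mdeg e) (mdeg m) with hle | hlt
    · refine Finset.sum_subset (by simpa using Nat.add_le_add_right hle 1) ?_
      intro nn _ hnn
      rw [Finset.mem_range] at hnn
      rw [LB_pow (LB_one hF) nn e (by omega), mul_zero, zero_mul]
    · rw [Finset.sum_eq_zero, Finset.sum_eq_zero]
      · intro nn _
        rw [coeff_prod_pow_eq_zero hφ hlt, mul_zero]
      · intro nn _
        rw [coeff_prod_pow_eq_zero hφ hlt, mul_zero]
  rw [Finset.sum_congr rfl hstep, Finset.sum_comm]
  refine Finset.sum_congr rfl fun nn _ => ?_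
  rw [← subst_pow hφ F nn, coeff_subst_def, Finset.mul_sum]
  refine Finset.sum_congr rfl fun e _ => ?_
  ring

lemma subst1_factor {ψ : PowerSeries ℂ} (hψ : PowerSeries.constantCoeff (R := ℂ) ψ = 0)
    {g : FPS l} (hg : MvPowerSeries.constantCoeff (σ := Fin l) (R := ℂ) g = 0) :
    subst1 ψ g = g * subst1 (PowerSeries.mk fun t => PowerSeries.coeff (R := ℂ) (t + 1) ψ) g := by
  apply MvPowerSeries.ext; intro m
  set ψ' := PowerSeries.mk fun t => PowerSeries.coeff (R := ℂ) (t + 1) ψ with hψ'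
  rw [coeff_subst1_def, MvPowerSeries.coeff_mul]
  have hstep : ∀ xy ∈ Finset.HasAntidiagonal.antidiagonal m,
      MvPowerSeries.coeff xy.1 g * MvPowerSeries.coeff xy.2 (subst1 ψ' g) =
      ∑ t ∈ Finset.range (mdeg m + 1),
        PowerSeries.coeff (R := ℂ) (t + 1) ψ *
          (MvPowerSeries.coeff xy.1 g * MvPowerSeries.coeff xy.2 (g ^ t)) := by
    intro xy hxy
    rw [Finset.HasAntidiagonal.mem_antidiagonal] at hxy
    have h2 : mdeg xy.2 ≤ mdeg m := by rw [← hxy, mdeg_add]; omega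
    rw [coeff_subst1_def, Finset.mul_sum]
    have hext : ∑ t ∈ Finset.range (mdeg xy.2 + 1), MvPowerSeries.coeff xy.1 g *
        (PowerSeries.coeff (R := ℂ) t ψ' * MvPowerSeries.coeff xy.2 (g ^ t)) =
        ∑ t ∈ Finset.range (mdeg m + 1), MvPowerSeries.coeff xy.1 g *
        (PowerSeries.coeff (R := ℂ) t ψ' * MvPowerSeries.coeff xy.2 (g ^ t)) := by
      refine Finset.sum_subset (by simpa using Nat.add_le_add_right h2 1) ?_
      intro t _ ht
      rw [Finset.mem_range] at ht
      rw [LB_pow (LB_one hg) t xy.2 (by omega), mul_zero, mul_zero]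
    rw [hext]
    refine Finset.sum_congr rfl fun t _ => ?_
    rw [hψ', PowerSeries.coeff_mk]
    ring
  rw [Finset.sum_congr rfl hstep, Finset.sum_comm]
  have hR : ∀ t ∈ Finset.range (mdeg m + 1),
      (∑ xy ∈ Finset.HasAntidiagonal.antidiagonal m, PowerSeries.coeff (R := ℂ) (t + 1) ψ *
        (MvPowerSeries.coeff xy.1 g * MvPowerSeries.coeff xy.2 (g ^ t))) =
      PowerSeries.coeff (R := ℂ) (t + 1) ψ * MvPowerSeries.coeff m (g ^ (t + 1)) := by
    intro t _
    rw [pow_succ']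
    rw [MvPowerSeries.coeff_mul, Finset.mul_sum]
  rw [Finset.sum_congr rfl hR]
  rw [Finset.sum_range_succ' (fun nn => PowerSeries.coeff (R := ℂ) nn ψ * MvPowerSeries.coeff m (g ^ nn))]
  rw [PowerSeries.coeff_zero_eq_constantCoeff, hψ, zero_mul, add_zero, Finset.sum_range_succ]
  rw [LB_pow (LB_one hg) (mdeg m + 1) m (by omega), mul_zero, add_zero]

end Aux

namespace Aux
open FPS

variable {n k l : ℕ}

lemma coeff_pderiv (i : Fin n) (f : FPS n) (m : Fin n →₀ ℕ) :
    MvPowerSeries.coeff m (pderiv i f) =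
      ((m i : ℂ) + 1) * MvPowerSeries.coeff (m + Finsupp.single i 1) f := rfl

lemma pderiv_mul (i : Fin n) (f g : FPS n) :
    pderiv i (f * g) = pderiv i f * g + f * pderiv i g := by
  classical
  apply MvPowerSeries.ext; intro m
  set δ : Fin n →₀ ℕ := Finsupp.single i 1 with hδ
  rw [map_add, coeff_pderiv, MvPowerSeries.coeff_mul, MvPowerSeries.coeff_mul,
    MvPowerSeries.coeff_mul, Finset.mul_sum]
  have hA : ∑ ab ∈ Finset.HasAntidiagonal.antidiagonal m,
      MvPowerSeries.coeff ab.1 (pderiv i f) * MvPowerSeries.coeff ab.2 g =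
      ∑ pq ∈ (Finset.HasAntidiagonal.antidiagonal (m + δ)).filter (fun pq => pq.1 i ≠ 0),
        (pq.1 i : ℂ) * MvPowerSeries.coeff pq.1 f * MvPowerSeries.coeff pq.2 g := by
    refine Finset.sum_nbij' (i := fun ab => (ab.1 + δ, ab.2)) (j := fun pq => (pq.1 - δ, pq.2))
      ?_ ?_ ?_ ?_ ?_
    · intro ab hab
      rw [Finset.HasAntidiagonal.mem_antidiagonal] at hab
      rw [Finset.mem_filter, Finset.HasAntidiagonal.mem_antidiagonal]
      constructor
      · rw [add_right_comm, hab]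
      · simp [hδ]
    · intro pq hpq
      rw [Finset.mem_filter, Finset.HasAntidiagonal.mem_antidiagonal] at hpq
      obtain ⟨hsum, hne⟩ := hpq
      have hle : δ ≤ pq.1 := by
        rw [hδ, Finsupp.single_le_iff]
        omega
      rw [Finset.HasAntidiagonal.mem_antidiagonal]
      have : pq.1 - δ + δ = pq.1 := tsub_add_cancel_of_le hle
      have h2 : pq.1 - δ + pq.2 + δ = m + δ := by
        rw [add_right_comm, this, hsum]
      exact add_right_cancel h2
    · intro ab _
      simp
    · intro pq hpq
      rw [Finset.mem_filter, Finset.HasAntidiagonal.mem_antidiagonal] at hpq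
      have hle : δ ≤ pq.1 := by
        rw [hδ, Finsupp.single_le_iff]
        omega
      have : pq.1 - δ + δ = pq.1 := tsub_add_cancel_of_le hle
      simp [this]
    · intro ab _
      rw [coeff_pderiv]
      have : ((ab.1 + δ) i : ℂ) = (ab.1 i : ℂ) + 1 := by
        rw [Finsupp.add_apply, hδ, Finsupp.single_eq_same]
        push_cast; ring
      rw [this]
  have hB : ∑ ab ∈ Finset.HasAntidiagonal.antidiagonal m,
      MvPowerSeries.coeff ab.1 f * MvPowerSeries.coeff ab.2 (pderiv i g) =
      ∑ pq ∈ (Finset.HasAntidiagonal.antidiagonal (m + δ)).filter (fun pq => pq.2 i ≠ 0),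
        (pq.2 i : ℂ) * MvPowerSeries.coeff pq.1 f * MvPowerSeries.coeff pq.2 g := by
    refine Finset.sum_nbij' (i := fun ab => (ab.1, ab.2 + δ)) (j := fun pq => (pq.1, pq.2 - δ))
      ?_ ?_ ?_ ?_ ?_
    · intro ab hab
      rw [Finset.HasAntidiagonal.mem_antidiagonal] at hab
      rw [Finset.mem_filter, Finset.HasAntidiagonal.mem_antidiagonal]
      constructor
      · rw [← add_assoc, hab]
      · simp [hδ]
    · intro pq hpq
      rw [Finset.mem_filter, Finset.HasAntidiagonal.mem_antidiagonal] at hpq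
      obtain ⟨hsum, hne⟩ := hpq
      have hle : δ ≤ pq.2 := by
        rw [hδ, Finsupp.single_le_iff]
        omega
      rw [Finset.HasAntidiagonal.mem_antidiagonal]
      have h1 : pq.2 - δ + δ = pq.2 := tsub_add_cancel_of_le hle
      have h2 : pq.1 + (pq.2 - δ) + δ = m + δ := by
        rw [add_assoc, h1, hsum]
      exact add_right_cancel h2
    · intro ab _
      simp
    · intro pq hpq
      rw [Finset.mem_filter, Finset.HasAntidiagonal.mem_antidiagonal] at hpq
      have hle : δ ≤ pq.2 := by
        rw [hδ, Finsupp.single_le_iff]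
        omega
      have : pq.2 - δ + δ = pq.2 := tsub_add_cancel_of_le hle
      simp [this]
    · intro ab _
      rw [coeff_pderiv]
      have : ((ab.2 + δ) i : ℂ) = (ab.2 i : ℂ) + 1 := by
        rw [Finsupp.add_apply, hδ, Finsupp.single_eq_same]
        push_cast; ring
      rw [this]
      ring
  rw [hA, hB, Finset.sum_filter_of_ne (by intro pq _ h hc; exact h (by rw [hc]; push_cast; ring)),
    Finset.sum_filter_of_ne (by intro pq _ h hc; exact h (by rw [hc]; push_cast; ring)),
    ← Finset.sum_add_distrib]
  refine Finset.sum_congr rfl fun pq hpq => ?_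
  rw [Finset.HasAntidiagonal.mem_antidiagonal] at hpq
  have hval : (pq.1 i : ℂ) + (pq.2 i : ℂ) = (m i : ℂ) + 1 := by
    have : pq.1 i + pq.2 i = m i + 1 := by
      have := congrArg (fun x => x i) hpq
      simpa [Finsupp.add_apply, hδ, Finsupp.single_eq_same] using this
    have h2 : ((pq.1 i + pq.2 i : ℕ) : ℂ) = ((m i + 1 : ℕ) : ℂ) := by rw [this]
    push_cast at h2
    linear_combination h2
  calc ((m i : ℂ) + 1) * (MvPowerSeries.coeff pq.1 f * MvPowerSeries.coeff pq.2 g)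
      = ((pq.1 i : ℂ) + (pq.2 i : ℂ)) * (MvPowerSeries.coeff pq.1 f *
          MvPowerSeries.coeff pq.2 g) := by rw [hval]
    _ = _ := by ring

end Aux

namespace Aux
open FPS

variable {n k l : ℕ}

lemma pderiv_X_self (i : Fin n) : pderiv i (MvPowerSeries.X i : FPS n) = 1 := by
  apply MvPowerSeries.ext; intro m
  rw [coeff_pderiv, MvPowerSeries.coeff_X, MvPowerSeries.coeff_one]
  rcases eq_or_ne m 0 with hm | hm
  · subst hm
    rw [if_pos (by rw [zero_add]), if_pos rfl]
    simp
  · rw [if_neg hm, if_neg, mul_zero]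
    intro h
    have : m + Finsupp.single i 1 = 0 + Finsupp.single i 1 := by rw [zero_add]; exact h
    exact hm (add_right_cancel this)

lemma pderiv_X_ne {i j : Fin n} (h : i ≠ j) :
    pderiv i (MvPowerSeries.X j : FPS n) = 0 := by
  apply MvPowerSeries.ext; intro m
  rw [coeff_pderiv, MvPowerSeries.coeff_X, if_neg, mul_zero, map_zero]
  intro hc
  have := congrArg (fun x => x i) hc
  simp only [Finsupp.add_apply, Finsupp.single_eq_same] at this
  rw [Finsupp.single_apply, if_neg (fun hji => h hji.symm)] at this
  omega

lemma pderiv_C (i : Fin n) (a : ℂ) :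
    pderiv i (MvPowerSeries.C (σ := Fin n) (R := ℂ) a : FPS n) = 0 := by
  apply MvPowerSeries.ext; intro m
  rw [coeff_pderiv, MvPowerSeries.coeff_C, if_neg, mul_zero, map_zero]
  intro hc
  have := congrArg (fun x => x i) hc
  simp [Finsupp.add_apply, Finsupp.single_eq_same] at this

lemma pderiv_one (i : Fin n) : pderiv i (1 : FPS n) = 0 := by
  have := pderiv_C i 1
  rwa [map_one] at this

lemma pderiv_pow_zero {i : Fin n} {f : FPS n} (h : pderiv i f = 0) :
    ∀ t : ℕ, pderiv i (f ^ t) = 0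
  | 0 => by rw [pow_zero, pderiv_one]
  | t + 1 => by
      rw [pow_succ, pderiv_mul, pderiv_pow_zero h t, h, zero_mul, mul_zero, add_zero]

lemma X_mul_pderiv_X_pow (i : Fin n) :
    ∀ t : ℕ, (MvPowerSeries.X i : FPS n) * pderiv i ((MvPowerSeries.X i : FPS n) ^ t) =
      MvPowerSeries.C (σ := Fin n) (R := ℂ) (t : ℂ) * (MvPowerSeries.X i : FPS n) ^ t
  | 0 => by
      rw [pow_zero, pderiv_one, mul_zero, Nat.cast_zero, map_zero, zero_mul]
  | t + 1 => by
      rw [pow_succ, pderiv_mul, pderiv_X_self, mul_one, mul_add]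
      rw [show (MvPowerSeries.X i : FPS n) * (pderiv i ((MvPowerSeries.X i : FPS n) ^ t) *
        MvPowerSeries.X i) = ((MvPowerSeries.X i : FPS n) *
          pderiv i ((MvPowerSeries.X i : FPS n) ^ t)) * MvPowerSeries.X i by ring,
        X_mul_pderiv_X_pow i t]
      push_cast
      rw [map_add, map_one]
      ring

lemma coeff_single_one_mul (i : Fin l) (f g : FPS l) :
    MvPowerSeries.coeff (Finsupp.single i 1) (f * g) =
      MvPowerSeries.coeff (Finsupp.single i 1) f * MvPowerSeries.constantCoeff (σ := Fin l) (R := ℂ) g +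
      MvPowerSeries.constantCoeff (σ := Fin l) (R := ℂ) f * MvPowerSeries.coeff (Finsupp.single i 1) g := by
  rw [MvPowerSeries.coeff_mul, Finsupp.antidiagonal_single, Finset.sum_map]
  rw [show Finset.HasAntidiagonal.antidiagonal (1 : ℕ) = {(0, 1), (1, 0)} from rfl]
  simp [MvPowerSeries.coeff_zero_eq_constantCoeff, add_comm]

lemma X_ne_zero (i : Fin l) : (MvPowerSeries.X i : FPS l) ≠ 0 := by
  intro h
  have := congrArg (MvPowerSeries.coeff (Finsupp.single i 1)) h
  rw [MvPowerSeries.coeff_X, if_pos rfl, map_zero] at this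
  exact one_ne_zero this

end Aux

namespace Aux
open FPS

lemma assemble (u v p q r0 r1 r2 a0 a1 a2 f0 f1 f2 d0 d1 d2 L2 L3 Φ Ψ cr : Fol2.O2)
    (h0 : u * d0 = r0 * f0 + u * (f0 * a0))
    (h1 : u * d1 = r1 * f1 + u * (f1 * a1))
    (h2 : u * d2 = r2 * f2 + u * (f2 * a2))
    (hΦ : Φ = u * v * Ψ) (hc : cr = p * r0 + q * r1) :
    u * v * ((p * (f1 * f2)) * d0 + ((q + L2 * Φ) * (f0 * f2)) * d1 +
        (L3 * Φ * (f0 * f1)) * d2)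
      = (f0 * f1 * f2) * (cr * v + u * v *
          (p * a0 + q * a1 + v * Ψ * (L2 * (r1 + u * a1) + L3 * (r2 + u * a2)))) := by
  subst hΦ hc
  linear_combination (v * (p * (f1 * f2))) * h0 +
    (v * ((q + L2 * (u * v * Ψ)) * (f0 * f2))) * h1 +
    (v * (L3 * (u * v * Ψ) * (f0 * f1))) * h2

end Aux
set_option maxHeartbeats 4000000 in
open FPS Fol2 Fol3 Glue in
theorem pullback_modelB2_both_positive
    (p1 p2 : ℕ) (hp1 : 0 < p1) (hp2 : 0 < p2)
    (φ : PowerSeries ℂ) (hφ : PowerSeries.constantCoeff (R := ℂ) φ = 0)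
    (l2 l3 : ℂ) (hl2 : l2 ≠ 0) (hl3 : l3 ≠ 0)
    -- the holomorphic form `ω = xyz ω̃` of the model (B2):
    (Ω : Fol3.Form3)
    (hΩ : Ω = ![Fol3.cC (p1 : ℂ) * (Fol3.X 1 * Fol3.X 2),
      (Fol3.cC (p2 : ℂ) + Fol3.cC l2 * FPS.subst1 φ (Fol3.X 0 ^ p1 * Fol3.X 1 ^ p2)) *
        (Fol3.X 0 * Fol3.X 2),
      Fol3.cC l3 * FPS.subst1 φ (Fol3.X 0 ^ p1 * Fol3.X 1 ^ p2) *
        (Fol3.X 0 * Fol3.X 1)])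
    -- the formal map `(ℂ²,0) → (ℂ³,0)`, with `φ̃ᵢ` invertible:
    (r s : Fin 3 → ℕ) (w : Fin 3 → (Fol2.O2)ˣ)
    (hto0 : ∀ i, 0 < r i + s i)
    (φm : Fin 3 → Fol2.O2)
    (hφm : ∀ i, φm i = Fol2.U ^ r i * Fol2.V ^ s i * (w i : Fol2.O2))
    -- `r = p₁r₁ + p₂r₂ > 0` and `s = p₁s₁ + p₂s₂ > 0`:
    (hr : 0 < p1 * r 0 + p2 * r 1) (hs : 0 < p1 * s 0 + p2 * s 1) :
    (∃ θ : Fol2.Form2,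
      (Fol2.U * Fol2.V) * Glue.pull32 φm Ω 0 =
        (φm 0 * φm 1 * φm 2) *
          (MvPowerSeries.C (σ := Fin 2) (R := ℂ) ((p1 * r 0 + p2 * r 1 : ℕ) : ℂ) * Fol2.V +
            Fol2.U * Fol2.V * θ 0) ∧
      (Fol2.U * Fol2.V) * Glue.pull32 φm Ω 1 =
        (φm 0 * φm 1 * φm 2) *
          (MvPowerSeries.C (σ := Fin 2) (R := ℂ) ((p1 * s 0 + p2 * s 1 : ℕ) : ℂ) * Fol2.U +
            Fol2.U * Fol2.V * θ 1)) ∧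
    -- consequently the pulled-back foliation (the saturation of `φ*ω`) has a
    -- simple non-degenerate singularity at the origin:
    (∃ (G : Fol2.Form2) (g : Fol2.O2), (∀ i, Glue.pull32 φm Ω i = g * G i) ∧
      Fol2.Reduced G ∧ Fol2.NonDegenerate G) := by
  classical
  subst hΩ
  simp only [Fol3.cC, Fol3.X]
  set M : Fol3.Form3 := ![MvPowerSeries.C (σ := Fin 3) (R := ℂ) (p1 : ℂ) *
        ((MvPowerSeries.X 1 : Fol3.O3) * MvPowerSeries.X 2),
      (MvPowerSeries.C (σ := Fin 3) (R := ℂ) (p2 : ℂ) + MvPowerSeries.C (σ := Fin 3) (R := ℂ) l2 *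
        FPS.subst1 φ ((MvPowerSeries.X 0 : Fol3.O3) ^ p1 * MvPowerSeries.X 1 ^ p2)) *
        ((MvPowerSeries.X 0 : Fol3.O3) * MvPowerSeries.X 2),
      MvPowerSeries.C (σ := Fin 3) (R := ℂ) l3 *
        FPS.subst1 φ ((MvPowerSeries.X 0 : Fol3.O3) ^ p1 * MvPowerSeries.X 1 ^ p2) *
        ((MvPowerSeries.X 0 : Fol3.O3) * MvPowerSeries.X 1)] with hMdef
  have hU0 : MvPowerSeries.constantCoeff (σ := Fin 2) (R := ℂ) Fol2.U = 0 := MvPowerSeries.constantCoeff_X 0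
  have hV0 : MvPowerSeries.constantCoeff (σ := Fin 2) (R := ℂ) Fol2.V = 0 := MvPowerSeries.constantCoeff_X 1
  have hφmc : ∀ i, MvPowerSeries.constantCoeff (σ := Fin 2) (R := ℂ) (φm i) = 0 := by
    intro i
    rw [hφm i, map_mul, map_mul, map_pow, map_pow, hU0, hV0]
    rcases Nat.eq_zero_or_pos (r i) with hri | hri
    · have hsi : s i ≠ 0 := by have := hto0 i; omega
      rw [zero_pow hsi, mul_zero, zero_mul]
    · rw [zero_pow hri.ne', zero_mul, zero_mul]
  -- the logarithmic-derivative identities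
  have key0 : ∀ j, Fol2.U * FPS.pderiv 0 (φm j)
      = MvPowerSeries.C (σ := Fin 2) (R := ℂ) ((r j : ℕ) : ℂ) * φm j +
        Fol2.U * (φm j * ((((w j)⁻¹ : (Fol2.O2)ˣ) : Fol2.O2) * FPS.pderiv 0 ((w j : Fol2.O2)))) := by
    intro j
    have hVs : FPS.pderiv 0 (Fol2.V ^ s j) = 0 :=
      Aux.pderiv_pow_zero (Aux.pderiv_X_ne (by decide)) (s j)
    have hXp : Fol2.U * FPS.pderiv 0 (Fol2.U ^ r j)
        = MvPowerSeries.C (σ := Fin 2) (R := ℂ) ((r j : ℕ) : ℂ) * Fol2.U ^ r j :=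
      Aux.X_mul_pderiv_X_pow 0 (r j)
    have hw : ((w j : Fol2.O2)) * (((w j)⁻¹ : (Fol2.O2)ˣ) : Fol2.O2) = 1 := Units.mul_inv _
    rw [hφm j, Aux.pderiv_mul, Aux.pderiv_mul, hVs]
    linear_combination (Fol2.V ^ s j * ((w j : Fol2.O2))) * hXp -
      (Fol2.U * Fol2.U ^ r j * Fol2.V ^ s j * FPS.pderiv 0 ((w j : Fol2.O2))) * hw
  have key1 : ∀ j, Fol2.V * FPS.pderiv 1 (φm j)
      = MvPowerSeries.C (σ := Fin 2) (R := ℂ) ((s j : ℕ) : ℂ) * φm j +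
        Fol2.V * (φm j * ((((w j)⁻¹ : (Fol2.O2)ˣ) : Fol2.O2) * FPS.pderiv 1 ((w j : Fol2.O2)))) := by
    intro j
    have hUs : FPS.pderiv 1 (Fol2.U ^ r j) = 0 :=
      Aux.pderiv_pow_zero (Aux.pderiv_X_ne (by decide)) (r j)
    have hXp : Fol2.V * FPS.pderiv 1 (Fol2.V ^ s j)
        = MvPowerSeries.C (σ := Fin 2) (R := ℂ) ((s j : ℕ) : ℂ) * Fol2.V ^ s j :=
      Aux.X_mul_pderiv_X_pow 1 (s j)
    have hw : ((w j : Fol2.O2)) * (((w j)⁻¹ : (Fol2.O2)ˣ) : Fol2.O2) = 1 := Units.mul_inv _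
    rw [hφm j, Aux.pderiv_mul, Aux.pderiv_mul, hUs]
    linear_combination (Fol2.U ^ r j * ((w j : Fol2.O2))) * hXp -
      (Fol2.V * Fol2.U ^ r j * Fol2.V ^ s j * FPS.pderiv 1 ((w j : Fol2.O2))) * hw
  -- substitution computations
  have hFc : MvPowerSeries.constantCoeff (σ := Fin 3) (R := ℂ)
      ((MvPowerSeries.X 0 : Fol3.O3) ^ p1 * MvPowerSeries.X 1 ^ p2) = 0 := by
    rw [map_mul, map_pow, MvPowerSeries.constantCoeff_X, zero_pow hp1.ne', zero_mul]
  have hswap : FPS.subst φm ((MvPowerSeries.X 0 : Fol3.O3) ^ p1 * MvPowerSeries.X 1 ^ p2)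
      = φm 0 ^ p1 * φm 1 ^ p2 := by
    rw [Aux.subst_mul hφmc, Aux.subst_pow hφmc, Aux.subst_pow hφmc,
      Aux.subst_X hφmc 0, Aux.subst_X hφmc 1]
  have hswap1 : FPS.subst φm (FPS.subst1 φ ((MvPowerSeries.X 0 : Fol3.O3) ^ p1 * MvPowerSeries.X 1 ^ p2))
      = FPS.subst1 φ (φm 0 ^ p1 * φm 1 ^ p2) := by
    rw [Aux.subst_subst1 hφmc hFc φ, hswap]
  -- factorization of the substituted series
  obtain ⟨R', hR'⟩ : ∃ t, p1 * r 0 + p2 * r 1 = t + 1 := ⟨p1 * r 0 + p2 * r 1 - 1, by omega⟩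
  obtain ⟨S', hS'⟩ : ∃ t, p1 * s 0 + p2 * s 1 = t + 1 := ⟨p1 * s 0 + p2 * s 1 - 1, by omega⟩
  have harg : φm 0 ^ p1 * φm 1 ^ p2
      = Fol2.U * Fol2.V * (Fol2.U ^ R' * Fol2.V ^ S' *
          ((w 0 : Fol2.O2) ^ p1 * (w 1 : Fol2.O2) ^ p2)) := by
    rw [hφm 0, hφm 1,
      show (Fol2.U ^ r 0 * Fol2.V ^ s 0 * (w 0 : Fol2.O2)) ^ p1 *
          (Fol2.U ^ r 1 * Fol2.V ^ s 1 * (w 1 : Fol2.O2)) ^ p2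
        = Fol2.U ^ (p1 * r 0 + p2 * r 1) * Fol2.V ^ (p1 * s 0 + p2 * s 1) *
          ((w 0 : Fol2.O2) ^ p1 * (w 1 : Fol2.O2) ^ p2) from by ring,
      hR', hS']
    ring
  have hargc : MvPowerSeries.constantCoeff (σ := Fin 2) (R := ℂ) (φm 0 ^ p1 * φm 1 ^ p2) = 0 := by
    rw [harg, map_mul, map_mul, hU0, hV0]
    ring
  have hΦfac : FPS.subst1 φ (φm 0 ^ p1 * φm 1 ^ p2) = Fol2.U * Fol2.V *
      ((Fol2.U ^ R' * Fol2.V ^ S' * ((w 0 : Fol2.O2) ^ p1 * (w 1 : Fol2.O2) ^ p2)) *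
        FPS.subst1 (PowerSeries.mk fun t => PowerSeries.coeff (R := ℂ) (t + 1) φ)
          (φm 0 ^ p1 * φm 1 ^ p2)) := by
    rw [Aux.subst1_factor hφ hargc]
    nth_rewrite 1 [harg]
    ring
  
  -- abbreviations
  set a0 := (((w 0)⁻¹ : (Fol2.O2)ˣ) : Fol2.O2) * FPS.pderiv 0 ((w 0 : Fol2.O2)) with ha0
  set a1 := (((w 1)⁻¹ : (Fol2.O2)ˣ) : Fol2.O2) * FPS.pderiv 0 ((w 1 : Fol2.O2)) with ha1
  set a2 := (((w 2)⁻¹ : (Fol2.O2)ˣ) : Fol2.O2) * FPS.pderiv 0 ((w 2 : Fol2.O2)) with ha2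
  set b0 := (((w 0)⁻¹ : (Fol2.O2)ˣ) : Fol2.O2) * FPS.pderiv 1 ((w 0 : Fol2.O2)) with hb0
  set b1 := (((w 1)⁻¹ : (Fol2.O2)ˣ) : Fol2.O2) * FPS.pderiv 1 ((w 1 : Fol2.O2)) with hb1
  set b2 := (((w 2)⁻¹ : (Fol2.O2)ˣ) : Fol2.O2) * FPS.pderiv 1 ((w 2 : Fol2.O2)) with hb2
  set Ψc := (Fol2.U ^ R' * Fol2.V ^ S' * ((w 0 : Fol2.O2) ^ p1 * (w 1 : Fol2.O2) ^ p2)) *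
      FPS.subst1 (PowerSeries.mk fun t => PowerSeries.coeff (R := ℂ) (t + 1) φ)
        (φm 0 ^ p1 * φm 1 ^ p2) with hΨc
  have hcr : MvPowerSeries.C (σ := Fin 2) (R := ℂ) ((p1 * r 0 + p2 * r 1 : ℕ) : ℂ)
      = MvPowerSeries.C (σ := Fin 2) (R := ℂ) (p1 : ℂ) * MvPowerSeries.C (σ := Fin 2) (R := ℂ) ((r 0 : ℕ) : ℂ)
        + MvPowerSeries.C (σ := Fin 2) (R := ℂ) (p2 : ℂ) * MvPowerSeries.C (σ := Fin 2) (R := ℂ) ((r 1 : ℕ) : ℂ) := by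
    rw [show ((p1 * r 0 + p2 * r 1 : ℕ) : ℂ)
        = (p1 : ℂ) * ((r 0 : ℕ) : ℂ) + (p2 : ℂ) * ((r 1 : ℕ) : ℂ) from by push_cast; ring,
      map_add, map_mul, map_mul]
  have hcs : MvPowerSeries.C (σ := Fin 2) (R := ℂ) ((p1 * s 0 + p2 * s 1 : ℕ) : ℂ)
      = MvPowerSeries.C (σ := Fin 2) (R := ℂ) (p1 : ℂ) * MvPowerSeries.C (σ := Fin 2) (R := ℂ) ((s 0 : ℕ) : ℂ)
        + MvPowerSeries.C (σ := Fin 2) (R := ℂ) (p2 : ℂ) * MvPowerSeries.C (σ := Fin 2) (R := ℂ) ((s 1 : ℕ) : ℂ) := by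
    rw [show ((p1 * s 0 + p2 * s 1 : ℕ) : ℂ)
        = (p1 : ℂ) * ((s 0 : ℕ) : ℂ) + (p2 : ℂ) * ((s 1 : ℕ) : ℂ) from by push_cast; ring,
      map_add, map_mul, map_mul]
  set θ0e := MvPowerSeries.C (σ := Fin 2) (R := ℂ) (p1 : ℂ) * a0 + MvPowerSeries.C (σ := Fin 2) (R := ℂ) (p2 : ℂ) * a1 +
      Fol2.V * Ψc * (MvPowerSeries.C (σ := Fin 2) (R := ℂ) l2 *
          (MvPowerSeries.C (σ := Fin 2) (R := ℂ) ((r 1 : ℕ) : ℂ) + Fol2.U * a1) +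
        MvPowerSeries.C (σ := Fin 2) (R := ℂ) l3 *
          (MvPowerSeries.C (σ := Fin 2) (R := ℂ) ((r 2 : ℕ) : ℂ) + Fol2.U * a2)) with hθ0e
  set θ1e := MvPowerSeries.C (σ := Fin 2) (R := ℂ) (p1 : ℂ) * b0 + MvPowerSeries.C (σ := Fin 2) (R := ℂ) (p2 : ℂ) * b1 +
      Fol2.U * Ψc * (MvPowerSeries.C (σ := Fin 2) (R := ℂ) l2 *
          (MvPowerSeries.C (σ := Fin 2) (R := ℂ) ((s 1 : ℕ) : ℂ) + Fol2.V * b1) +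
        MvPowerSeries.C (σ := Fin 2) (R := ℂ) l3 *
          (MvPowerSeries.C (σ := Fin 2) (R := ℂ) ((s 2 : ℕ) : ℂ) + Fol2.V * b2)) with hθ1e
  -- expansion of the pull-back
  have hexp : ∀ (M : Fol3.Form3) (i2 : Fin 2), Glue.pull32 φm M i2 =
      FPS.subst φm (M 0) * FPS.pderiv i2 (φm 0) + FPS.subst φm (M 1) * FPS.pderiv i2 (φm 1) +
      FPS.subst φm (M 2) * FPS.pderiv i2 (φm 2) := by
    intro M i2
    show (∑ j, FPS.subst φm (M j) * FPS.pderiv i2 (φm j)) = _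
    rw [Fin.sum_univ_three]
  -- the two main identities
  have hsub0 : FPS.subst φm (M 0)
      = MvPowerSeries.C (σ := Fin 2) (R := ℂ) (p1 : ℂ) * (φm 1 * φm 2) := by
    show FPS.subst φm (MvPowerSeries.C (σ := Fin 3) (R := ℂ) (p1 : ℂ) *
      ((MvPowerSeries.X 1 : Fol3.O3) * MvPowerSeries.X 2)) = _
    rw [Aux.subst_mul hφmc, Aux.subst_mul hφmc, Aux.subst_C, Aux.subst_X hφmc, Aux.subst_X hφmc]
  have hsub1 : FPS.subst φm (M 1)
      = (MvPowerSeries.C (σ := Fin 2) (R := ℂ) (p2 : ℂ) + MvPowerSeries.C (σ := Fin 2) (R := ℂ) l2 *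
          FPS.subst1 φ (φm 0 ^ p1 * φm 1 ^ p2)) * (φm 0 * φm 2) := by
    show FPS.subst φm ((MvPowerSeries.C (σ := Fin 3) (R := ℂ) (p2 : ℂ) + MvPowerSeries.C (σ := Fin 3) (R := ℂ) l2 *
        FPS.subst1 φ ((MvPowerSeries.X 0 : Fol3.O3) ^ p1 * MvPowerSeries.X 1 ^ p2)) *
        ((MvPowerSeries.X 0 : Fol3.O3) * MvPowerSeries.X 2)) = _
    rw [Aux.subst_mul hφmc, Aux.subst_add, Aux.subst_mul hφmc, hswap1, Aux.subst_mul hφmc,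
      Aux.subst_C, Aux.subst_C, Aux.subst_X hφmc, Aux.subst_X hφmc]
  have hsub2 : FPS.subst φm (M 2)
      = MvPowerSeries.C (σ := Fin 2) (R := ℂ) l3 * FPS.subst1 φ (φm 0 ^ p1 * φm 1 ^ p2) *
          (φm 0 * φm 1) := by
    show FPS.subst φm (MvPowerSeries.C (σ := Fin 3) (R := ℂ) l3 *
        FPS.subst1 φ ((MvPowerSeries.X 0 : Fol3.O3) ^ p1 * MvPowerSeries.X 1 ^ p2) *
        ((MvPowerSeries.X 0 : Fol3.O3) * MvPowerSeries.X 1)) = _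
    rw [Aux.subst_mul hφmc, Aux.subst_mul hφmc, Aux.subst_mul hφmc, hswap1,
      Aux.subst_C, Aux.subst_X hφmc, Aux.subst_X hφmc]
  have heq0 : (Fol2.U * Fol2.V) * Glue.pull32 φm M 0 = (φm 0 * φm 1 * φm 2) *
      (MvPowerSeries.C (σ := Fin 2) (R := ℂ) ((p1 * r 0 + p2 * r 1 : ℕ) : ℂ) * Fol2.V +
        Fol2.U * Fol2.V * θ0e) := by
    rw [hexp M 0, hsub0, hsub1, hsub2, hθ0e]
    linear_combination Aux.assemble Fol2.U Fol2.V (MvPowerSeries.C (σ := Fin 2) (R := ℂ) (p1 : ℂ))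
      (MvPowerSeries.C (σ := Fin 2) (R := ℂ) (p2 : ℂ)) (MvPowerSeries.C (σ := Fin 2) (R := ℂ) ((r 0 : ℕ) : ℂ))
      (MvPowerSeries.C (σ := Fin 2) (R := ℂ) ((r 1 : ℕ) : ℂ)) (MvPowerSeries.C (σ := Fin 2) (R := ℂ) ((r 2 : ℕ) : ℂ))
      a0 a1 a2 (φm 0) (φm 1) (φm 2) (FPS.pderiv 0 (φm 0)) (FPS.pderiv 0 (φm 1))
      (FPS.pderiv 0 (φm 2)) (MvPowerSeries.C (σ := Fin 2) (R := ℂ) l2) (MvPowerSeries.C (σ := Fin 2) (R := ℂ) l3)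
      (FPS.subst1 φ (φm 0 ^ p1 * φm 1 ^ p2)) Ψc
      (MvPowerSeries.C (σ := Fin 2) (R := ℂ) ((p1 * r 0 + p2 * r 1 : ℕ) : ℂ))
      (key0 0) (key0 1) (key0 2) hΦfac hcr
  have hΦfacVU : FPS.subst1 φ (φm 0 ^ p1 * φm 1 ^ p2) = Fol2.V * Fol2.U * Ψc := by
    rw [hΦfac]; ring
  have heq1 : (Fol2.U * Fol2.V) * Glue.pull32 φm M 1 = (φm 0 * φm 1 * φm 2) *
      (MvPowerSeries.C (σ := Fin 2) (R := ℂ) ((p1 * s 0 + p2 * s 1 : ℕ) : ℂ) * Fol2.U +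
        Fol2.U * Fol2.V * θ1e) := by
    rw [hexp M 1, hsub0, hsub1, hsub2, hθ1e]
    linear_combination Aux.assemble Fol2.V Fol2.U (MvPowerSeries.C (σ := Fin 2) (R := ℂ) (p1 : ℂ))
      (MvPowerSeries.C (σ := Fin 2) (R := ℂ) (p2 : ℂ)) (MvPowerSeries.C (σ := Fin 2) (R := ℂ) ((s 0 : ℕ) : ℂ))
      (MvPowerSeries.C (σ := Fin 2) (R := ℂ) ((s 1 : ℕ) : ℂ)) (MvPowerSeries.C (σ := Fin 2) (R := ℂ) ((s 2 : ℕ) : ℂ))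
      b0 b1 b2 (φm 0) (φm 1) (φm 2) (FPS.pderiv 1 (φm 0)) (FPS.pderiv 1 (φm 1))
      (FPS.pderiv 1 (φm 2)) (MvPowerSeries.C (σ := Fin 2) (R := ℂ) l2) (MvPowerSeries.C (σ := Fin 2) (R := ℂ) l3)
      (FPS.subst1 φ (φm 0 ^ p1 * φm 1 ^ p2)) Ψc
      (MvPowerSeries.C (σ := Fin 2) (R := ℂ) ((p1 * s 0 + p2 * s 1 : ℕ) : ℂ))
      (key1 0) (key1 1) (key1 2) hΦfacVU hcs
  -- part (ii): factor out and analyse the linear part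
  have hr01 : 0 < r 0 + r 1 := by
    by_contra hcon
    push_neg at hcon
    have h0 : r 0 = 0 := by omega
    have h1 : r 1 = 0 := by omega
    rw [h0, h1, Nat.mul_zero, Nat.mul_zero] at hr
    exact absurd hr (by omega)
  have hs01 : 0 < s 0 + s 1 := by
    by_contra hcon
    push_neg at hcon
    have h0 : s 0 = 0 := by omega
    have h1 : s 1 = 0 := by omega
    rw [h0, h1, Nat.mul_zero, Nat.mul_zero] at hs
    exact absurd hs (by omega)
  obtain ⟨Rt, hRt⟩ : ∃ t, r 0 + r 1 + r 2 = t + 1 := ⟨r 0 + r 1 + r 2 - 1, by omega⟩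
  obtain ⟨St, hSt⟩ : ∃ t, s 0 + s 1 + s 2 = t + 1 := ⟨s 0 + s 1 + s 2 - 1, by omega⟩
  set Qe := Fol2.U ^ Rt * Fol2.V ^ St *
      ((w 0 : Fol2.O2) * (w 1 : Fol2.O2) * (w 2 : Fol2.O2)) with hQe
  have hP : φm 0 * φm 1 * φm 2 = Fol2.U * Fol2.V * Qe := by
    rw [hφm 0, hφm 1, hφm 2,
      show Fol2.U ^ r 0 * Fol2.V ^ s 0 * (w 0 : Fol2.O2) *
          (Fol2.U ^ r 1 * Fol2.V ^ s 1 * (w 1 : Fol2.O2)) *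
          (Fol2.U ^ r 2 * Fol2.V ^ s 2 * (w 2 : Fol2.O2))
        = Fol2.U ^ (r 0 + r 1 + r 2) * Fol2.V ^ (s 0 + s 1 + s 2) *
          ((w 0 : Fol2.O2) * (w 1 : Fol2.O2) * (w 2 : Fol2.O2)) from by ring,
      hRt, hSt, hQe]
    ring
  have hUVne : (Fol2.U * Fol2.V : Fol2.O2) ≠ 0 :=
    mul_ne_zero (Aux.X_ne_zero 0) (Aux.X_ne_zero 1)
  have hpull0 : Glue.pull32 φm M 0 = Qe *
      (MvPowerSeries.C (σ := Fin 2) (R := ℂ) ((p1 * r 0 + p2 * r 1 : ℕ) : ℂ) * Fol2.V +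
        Fol2.U * Fol2.V * θ0e) := by
    apply mul_left_cancel₀ hUVne
    rw [heq0, hP]; ring
  have hpull1 : Glue.pull32 φm M 1 = Qe *
      (MvPowerSeries.C (σ := Fin 2) (R := ℂ) ((p1 * s 0 + p2 * s 1 : ℕ) : ℂ) * Fol2.U +
        Fol2.U * Fol2.V * θ1e) := by
    apply mul_left_cancel₀ hUVne
    rw [heq1, hP]; ring
  -- coefficient computations on the factored form
  have hLB0 : Aux.LB 2 (Fol2.U * Fol2.V * θ0e) :=
    Aux.LB_mul (Aux.LB_mul (Aux.LB_one hU0) (Aux.LB_one hV0)) (Aux.LB_zero _)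
  have hLB1 : Aux.LB 2 (Fol2.U * Fol2.V * θ1e) :=
    Aux.LB_mul (Aux.LB_mul (Aux.LB_one hU0) (Aux.LB_one hV0)) (Aux.LB_zero _)
  have hone : (1 : ℕ) < 2 := by omega
  have cV1 : MvPowerSeries.coeff (Finsupp.single (1 : Fin 2) 1) Fol2.V = 1 := by
    show MvPowerSeries.coeff _ (MvPowerSeries.X 1) = 1
    rw [MvPowerSeries.coeff_X, if_pos rfl]
  have cV0 : MvPowerSeries.coeff (Finsupp.single (0 : Fin 2) 1) Fol2.V = 0 := by
    show MvPowerSeries.coeff _ (MvPowerSeries.X 1) = 0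
    rw [MvPowerSeries.coeff_X, if_neg]
    intro h
    have := DFunLike.congr_fun h (0 : Fin 2)
    simp [Finsupp.single_apply] at this
  have cU0 : MvPowerSeries.coeff (Finsupp.single (0 : Fin 2) 1) Fol2.U = 1 := by
    show MvPowerSeries.coeff _ (MvPowerSeries.X 0) = 1
    rw [MvPowerSeries.coeff_X, if_pos rfl]
  have cU1 : MvPowerSeries.coeff (Finsupp.single (1 : Fin 2) 1) Fol2.U = 0 := by
    show MvPowerSeries.coeff _ (MvPowerSeries.X 0) = 0
    rw [MvPowerSeries.coeff_X, if_neg]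
    intro h
    have := DFunLike.congr_fun h (0 : Fin 2)
    simp [Finsupp.single_apply] at this
  have cCs : ∀ (i : Fin 2) (z : ℂ),
      MvPowerSeries.coeff (Finsupp.single i 1) (MvPowerSeries.C (σ := Fin 2) (R := ℂ) z) = 0 := by
    intro i z
    rw [MvPowerSeries.coeff_C, if_neg]
    intro h
    have := DFunLike.congr_fun h i
    simp [Finsupp.single_apply] at this
  have cCc : ∀ z : ℂ,
      MvPowerSeries.constantCoeff (σ := Fin 2) (R := ℂ) (MvPowerSeries.C (σ := Fin 2) (R := ℂ) z) = z := fun z =>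
    MvPowerSeries.constantCoeff_C _
  set G0e := MvPowerSeries.C (σ := Fin 2) (R := ℂ) ((p1 * r 0 + p2 * r 1 : ℕ) : ℂ) * Fol2.V +
      Fol2.U * Fol2.V * θ0e with hG0e
  set G1e := MvPowerSeries.C (σ := Fin 2) (R := ℂ) ((p1 * s 0 + p2 * s 1 : ℕ) : ℂ) * Fol2.U +
      Fol2.U * Fol2.V * θ1e with hG1e
  have F1 : MvPowerSeries.coeff (Finsupp.single (0 : Fin 2) 1) G0e = 0 := by
    rw [hG0e, map_add, Aux.coeff_single_one_mul,
      hLB0 _ (by rw [Aux.mdeg_single]; omega), add_zero, cV0, mul_zero, add_zero,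
      cCs, zero_mul]
  have F2 : MvPowerSeries.coeff (Finsupp.single (1 : Fin 2) 1) G0e
      = ((p1 * r 0 + p2 * r 1 : ℕ) : ℂ) := by
    rw [hG0e, map_add, Aux.coeff_single_one_mul,
      hLB0 _ (by rw [Aux.mdeg_single]; omega), add_zero, cV1, cCs, zero_mul, zero_add,
      cCc, mul_one]
  have F3 : MvPowerSeries.coeff (Finsupp.single (0 : Fin 2) 1) G1e
      = ((p1 * s 0 + p2 * s 1 : ℕ) : ℂ) := by
    rw [hG1e, map_add, Aux.coeff_single_one_mul,
      hLB1 _ (by rw [Aux.mdeg_single]; omega), add_zero, cU0, cCs, zero_mul, zero_add,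
      cCc, mul_one]
  have F4 : MvPowerSeries.coeff (Finsupp.single (1 : Fin 2) 1) G1e = 0 := by
    rw [hG1e, map_add, Aux.coeff_single_one_mul,
      hLB1 _ (by rw [Aux.mdeg_single]; omega), add_zero, cU1, mul_zero, add_zero,
      cCs, zero_mul]
  have F5 : MvPowerSeries.constantCoeff (σ := Fin 2) (R := ℂ) G0e = 0 := by
    rw [hG0e, map_add, map_mul, map_mul, map_mul, hV0, hU0, mul_zero, zero_mul, zero_mul,
      add_zero]
  have F6 : MvPowerSeries.constantCoeff (σ := Fin 2) (R := ℂ) G1e = 0 := by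
    rw [hG1e, map_add, map_mul, map_mul, map_mul, hV0, hU0, mul_zero, zero_mul, zero_mul]
    ring
  have hrne : ((p1 * r 0 + p2 * r 1 : ℕ) : ℂ) ≠ 0 := Nat.cast_ne_zero.mpr (by omega)
  have hsne : ((p1 * s 0 + p2 * s 1 : ℕ) : ℂ) ≠ 0 := Nat.cast_ne_zero.mpr (by omega)
  have hLM : Fol2.linMat ![G0e, G1e] =
      !![((p1 * s 0 + p2 * s 1 : ℕ) : ℂ), 0; 0, -((p1 * r 0 + p2 * r 1 : ℕ) : ℂ)] := by
    show (!![MvPowerSeries.coeff (Finsupp.single 0 1) G1e,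
      MvPowerSeries.coeff (Finsupp.single 1 1) G1e;
      -MvPowerSeries.coeff (Finsupp.single 0 1) G0e,
      -MvPowerSeries.coeff (Finsupp.single 1 1) G0e]) = _
    rw [F1, F2, F3, F4, neg_zero]
  -- simple non-degenerate singularity of G
  have hIsSing : Fol2.IsSing ![G0e, G1e] := by
    intro i
    fin_cases i
    · exact F5
    · exact F6
  have hsq : Fol2.linMat ![G0e, G1e] * Fol2.linMat ![G0e, G1e] ≠ 0 := by
    rw [hLM]
    intro hc
    have h00 := congrFun (congrFun hc 0) 0
    rw [Matrix.mul_fin_two] at h00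
    simp at h00
    exact hsne (by exact_mod_cast h00)
  have heig : ∀ a b : ℂ, a + b = (Fol2.linMat ![G0e, G1e]).trace →
      a * b = (Fol2.linMat ![G0e, G1e]).det → ∀ q : ℚ, 0 < q → a ≠ (q : ℂ) * b := by
    intro a b hab hdet q hq hae
    rw [hLM, Matrix.trace_fin_two_of] at hab
    rw [hLM, Matrix.det_fin_two_of] at hdet
    have key : (a - ((p1 * s 0 + p2 * s 1 : ℕ) : ℂ)) *
        (a + ((p1 * r 0 + p2 * r 1 : ℕ) : ℂ)) = 0 := by
      linear_combination a * hab - hdet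
    have c1 : (0 : ℚ) < ((p1 * s 0 + p2 * s 1 : ℕ) : ℚ) := by exact_mod_cast hs
    have c2 : (0 : ℚ) < ((p1 * r 0 + p2 * r 1 : ℕ) : ℚ) := by exact_mod_cast hr
    rcases mul_eq_zero.mp key with h1 | h2
    · have ha : a = ((p1 * s 0 + p2 * s 1 : ℕ) : ℂ) := by linear_combination h1
      have hb : b = -((p1 * r 0 + p2 * r 1 : ℕ) : ℂ) := by linear_combination hab - ha
      rw [ha, hb] at hae
      have hQ : ((p1 * s 0 + p2 * s 1 : ℕ) : ℚ) + q * ((p1 * r 0 + p2 * r 1 : ℕ) : ℚ) = 0 := by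
        have hc : ((((p1 * s 0 + p2 * s 1 : ℕ) : ℚ) + q * ((p1 * r 0 + p2 * r 1 : ℕ) : ℚ) : ℚ)
            : ℂ) = 0 := by
          push_cast
          push_cast at hae
          linear_combination hae
        exact_mod_cast hc
      nlinarith
    · have ha : a = -((p1 * r 0 + p2 * r 1 : ℕ) : ℂ) := by linear_combination h2
      have hb : b = ((p1 * s 0 + p2 * s 1 : ℕ) : ℂ) := by linear_combination hab - ha
      rw [ha, hb] at hae
      have hQ : ((p1 * r 0 + p2 * r 1 : ℕ) : ℚ) + q * ((p1 * s 0 + p2 * s 1 : ℕ) : ℚ) = 0 := by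
        have hc : ((((p1 * r 0 + p2 * r 1 : ℕ) : ℚ) + q * ((p1 * s 0 + p2 * s 1 : ℕ) : ℚ) : ℚ)
            : ℂ) = 0 := by
          push_cast
          push_cast at hae
          linear_combination -hae
        exact_mod_cast hc
      nlinarith
  have hdet : (Fol2.linMat ![G0e, G1e]).det ≠ 0 := by
    rw [hLM, Matrix.det_fin_two_of]
    intro hc
    have : ((p1 * s 0 + p2 * s 1 : ℕ) : ℂ) * ((p1 * r 0 + p2 * r 1 : ℕ) : ℂ) = 0 := by
      linear_combination -hc
    rcases mul_eq_zero.mp this with h | h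
    · exact hsne h
    · exact hrne h
  have hred : Fol2.Reduced ![G0e, G1e] := by
    intro d hd0 hd1
    by_contra hdu
    have hdc : MvPowerSeries.constantCoeff (σ := Fin 2) (R := ℂ) d = 0 := by
      by_contra h
      exact hdu (MvPowerSeries.isUnit_iff_constantCoeff.mpr (isUnit_iff_ne_zero.mpr h))
    obtain ⟨e, he⟩ := hd0
    obtain ⟨f2, hf2⟩ := hd1
    have hG0d : G0e = d * e := he
    have hG1d : G1e = d * f2 := hf2
    have h2 := congrArg (MvPowerSeries.coeff (Finsupp.single (1 : Fin 2) 1)) hG0d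
    rw [F2, Aux.coeff_single_one_mul, hdc, zero_mul, add_zero] at h2
    have h1 := congrArg (MvPowerSeries.coeff (Finsupp.single (0 : Fin 2) 1)) hG0d
    rw [F1, Aux.coeff_single_one_mul, hdc, zero_mul, add_zero] at h1
    have h3 := congrArg (MvPowerSeries.coeff (Finsupp.single (0 : Fin 2) 1)) hG1d
    rw [F3, Aux.coeff_single_one_mul, hdc, zero_mul, add_zero] at h3
    have he0 : MvPowerSeries.constantCoeff (σ := Fin 2) (R := ℂ) e ≠ 0 := by
      intro h
      rw [h, mul_zero] at h2
      exact hrne h2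
    have hdu0 : MvPowerSeries.coeff (Finsupp.single (0 : Fin 2) 1) d = 0 := by
      rcases mul_eq_zero.mp h1.symm with h | h
      · exact h
      · exact absurd h he0
    rw [hdu0, zero_mul] at h3
    exact hsne h3
  -- conclusion
  refine ⟨⟨![θ0e, θ1e], ?_, ?_⟩, ![G0e, G1e], Qe, ?_, hred, ⟨⟨hIsSing, hsq, heig⟩, hdet⟩⟩
  · rw [show (![θ0e, θ1e] : Fol2.Form2) 0 = θ0e from rfl]
    exact heq0
  · rw [show (![θ0e, θ1e] : Fol2.Form2) 1 = θ1e from rfl]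
    exact heq1
  · intro i
    fin_cases i
    · exact hpull0
    · exact hpull1
end
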